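/- arXiv:1502.07641 — 6 statements merged into one kernel-verified Lean document; each statement's English description precedes it below -/
import Mathlib

section
/- If A, B, C are real random variables such that sup_t |P{A ≤ t} − Φ(t)| ≤ ε_A, and with probability at least 1 − ε_{BC} one has |B| ≤ δ_B and |C| ≤ δ_C, where ε_A, ε_{BC}, δ_B, δ_C ∈ [0,1), then sup_t |P{(A+B)/(1+C) ≤ t} − Φ(t)| ≤ δ_B + δ_C/(1−δ_C) + ε_A + ε_{BC}. -/
open MeasureTheory ProbabilityTheory Real

/-- The standard normal cumulative distribution function. -/
noncomputable def stdNormalCDF (t : ℝ) : ℝ :=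
  ((ProbabilityTheory.gaussianReal 0 1) (Set.Iic t)).toReal

lemma pdf_eq (x : ℝ) :
    gaussianPDFReal 0 1 x = (Real.sqrt (2 * π))⁻¹ * Real.exp (-x ^ 2 / 2) := by
  simp [gaussianPDFReal]

lemma pdf_le_one (x : ℝ) : gaussianPDFReal 0 1 x ≤ 1 := by
  rw [pdf_eq]
  have h1 : (1 : ℝ) ≤ Real.sqrt (2 * π) := by
    rw [show (1 : ℝ) = Real.sqrt 1 by simp]
    exact Real.sqrt_le_sqrt (by nlinarith [Real.pi_gt_three])
  have h2 : Real.exp (-x ^ 2 / 2) ≤ 1 := by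
    rw [← Real.exp_zero]
    exact Real.exp_le_exp.mpr (by nlinarith [sq_nonneg x])
  have h3 : (Real.sqrt (2 * π))⁻¹ ≤ 1 := by
    rw [inv_le_one_iff₀]; right; exact h1
  nlinarith [Real.exp_pos (-x ^ 2 / 2), inv_nonneg.mpr (Real.sqrt_nonneg (2 * π))]

lemma abs_mul_pdf_le_one (x : ℝ) : |x| * gaussianPDFReal 0 1 x ≤ 1 := by
  rw [pdf_eq]
  have h1 : |x| ≤ Real.exp (x ^ 2 / 2) := by
    have := Real.add_one_le_exp (x ^ 2 / 2)
    nlinarith [sq_nonneg (|x| - 1), sq_abs x]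
  have h2 : Real.exp (-x ^ 2 / 2) = (Real.exp (x ^ 2 / 2))⁻¹ := by
    rw [← Real.exp_neg]; ring_nf
  have h3 : |x| * Real.exp (-x ^ 2 / 2) ≤ 1 := by
    rw [h2, mul_inv_le_iff₀ (Real.exp_pos _), one_mul]; exact h1
  have h4 : (Real.sqrt (2 * π))⁻¹ ≤ 1 := by
    rw [inv_le_one_iff₀]; right
    rw [show (1 : ℝ) = Real.sqrt 1 by simp]
    exact Real.sqrt_le_sqrt (by nlinarith [Real.pi_gt_three])
  have h5 : (0:ℝ) ≤ (Real.sqrt (2 * π))⁻¹ := by positivity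
  nlinarith [abs_nonneg x, Real.exp_pos (-x ^ 2 / 2), (Real.exp_pos (-x ^ 2 / 2)).le]

lemma pdf_mono {a x : ℝ} (h : |a| ≤ |x|) :
    gaussianPDFReal 0 1 x ≤ gaussianPDFReal 0 1 a := by
  rw [pdf_eq, pdf_eq]
  have hsq : a ^ 2 ≤ x ^ 2 := by
    rw [← sq_abs a, ← sq_abs x]
    exact pow_le_pow_left₀ (abs_nonneg _) h 2
  have : Real.exp (-x ^ 2 / 2) ≤ Real.exp (-a ^ 2 / 2) :=
    Real.exp_le_exp.mpr (by linarith)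
  have h5 : (0:ℝ) ≤ (Real.sqrt (2 * π))⁻¹ := by positivity
  exact mul_le_mul_of_nonneg_left this h5

lemma gauss_Ioc (a b : ℝ) (hab : a ≤ b) :
    stdNormalCDF b - stdNormalCDF a
      = ((ProbabilityTheory.gaussianReal 0 1) (Set.Ioc a b)).toReal := by
  have h : Set.Iic a ∪ Set.Ioc a b = Set.Iic b := Set.Iic_union_Ioc_eq_Iic hab
  have hd : Disjoint (Set.Iic a) (Set.Ioc a b) := Set.Iic_disjoint_Ioc le_rfl
  rw [stdNormalCDF, stdNormalCDF, ← h, measure_union hd measurableSet_Ioc,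
    ENNReal.toReal_add (measure_ne_top _ _) (measure_ne_top _ _)]
  ring

lemma stdNormalCDF_mono {a b : ℝ} (hab : a ≤ b) : stdNormalCDF a ≤ stdNormalCDF b :=
  ENNReal.toReal_mono (measure_ne_top _ _) (measure_mono (Set.Iic_subset_Iic.mpr hab))

lemma strip (a b M : ℝ) (hab : a ≤ b) (hM : 0 ≤ M)
    (h : ∀ x ∈ Set.Ioc a b, gaussianPDFReal 0 1 x ≤ M) :
    stdNormalCDF b - stdNormalCDF a ≤ (b - a) * M := by
  rw [gauss_Ioc a b hab]
  have h1 : (ProbabilityTheory.gaussianReal 0 1) (Set.Ioc a b)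
      ≤ ENNReal.ofReal ((b - a) * M) := by
    rw [gaussianReal_apply 0 one_ne_zero]
    calc ∫⁻ x in Set.Ioc a b, gaussianPDF 0 1 x
        ≤ ∫⁻ _ in Set.Ioc a b, ENNReal.ofReal M := by
          refine setLIntegral_mono measurable_const fun x hx => ?_
          exact ENNReal.ofReal_le_ofReal (h x hx)
      _ = ENNReal.ofReal M * volume (Set.Ioc a b) := by rw [setLIntegral_const]
      _ = ENNReal.ofReal ((b - a) * M) := by
          rw [Real.volume_Ioc, ← ENNReal.ofReal_mul hM]
          congr 1; ring
  exact ENNReal.toReal_le_of_le_ofReal (by nlinarith) h1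

lemma keyA {δB δC : ℝ} (hB0 : 0 ≤ δB) (hC0 : 0 ≤ δC) (hC1 : δC < 1) (t : ℝ) :
    stdNormalCDF (t + (δB + |t| * δC)) - stdNormalCDF t ≤ δB + δC / (1 - δC) := by
  have h1C : (0 : ℝ) < 1 - δC := by linarith
  set c := t + |t| * δC with hc
  have hct : t ≤ c := le_add_of_nonneg_right (by positivity)
  have hδCle : δC ≤ δC / (1 - δC) := by
    rw [le_div_iff₀ h1C]; nlinarith
  have h1 : stdNormalCDF (c + δB) - stdNormalCDF c ≤ δB := by
    have hs := strip c (c + δB) 1 (by linarith) zero_le_one fun x _ => pdf_le_one x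
    have : (c + δB - c) * 1 = δB := by ring
    linarith
  have h2 : stdNormalCDF c - stdNormalCDF t ≤ δC / (1 - δC) := by
    rcases le_or_gt 0 t with ht | ht
    · have habs : |t| = t := abs_of_nonneg ht
      have hs := strip t c (gaussianPDFReal 0 1 t) hct (gaussianPDFReal_nonneg _ _ _)
        (fun x hx => pdf_mono (by
          rw [habs, abs_of_nonneg (le_trans ht hx.1.le)]; exact hx.1.le))
      have hx1 : |t| * gaussianPDFReal 0 1 t ≤ 1 := abs_mul_pdf_le_one t
      have key : (c - t) * gaussianPDFReal 0 1 t
          = δC * (|t| * gaussianPDFReal 0 1 t) := by rw [hc]; ring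
      have : (c - t) * gaussianPDFReal 0 1 t ≤ δC := by
        rw [key]; nlinarith
      linarith
    · have habs : |t| = -t := abs_of_neg ht
      have hc0 : c ≤ 0 := by rw [hc, habs]; nlinarith
      have hs := strip t c (gaussianPDFReal 0 1 c) hct (gaussianPDFReal_nonneg _ _ _)
        (fun x hx => pdf_mono (by
          rw [abs_of_nonpos hc0, abs_of_nonpos (hx.2.trans hc0)]; linarith [hx.2]))
      have hx1 : |c| * gaussianPDFReal 0 1 c ≤ 1 := abs_mul_pdf_le_one c
      rw [abs_of_nonpos hc0] at hx1
      have key : (1 - δC) * ((c - t) * gaussianPDFReal 0 1 c)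
          = δC * (-c * gaussianPDFReal 0 1 c) := by rw [hc, habs]; ring
      have : (c - t) * gaussianPDFReal 0 1 c ≤ δC / (1 - δC) := by
        rw [le_div_iff₀ h1C]
        nlinarith
      exact hs.trans this
  have : t + (δB + |t| * δC) = c + δB := by rw [hc]; ring
  rw [this]; linarith

lemma keyB {δB δC : ℝ} (hB0 : 0 ≤ δB) (hC0 : 0 ≤ δC) (hC1 : δC < 1) (t : ℝ) :
    stdNormalCDF t - stdNormalCDF (t - (δB + |t| * δC)) ≤ δB + δC / (1 - δC) := by
  have h1C : (0 : ℝ) < 1 - δC := by linarith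
  set c := t - |t| * δC with hc
  have hct : c ≤ t := by rw [hc]; nlinarith [abs_nonneg t]
  have hδCle : δC ≤ δC / (1 - δC) := by
    rw [le_div_iff₀ h1C]; nlinarith
  have h1 : stdNormalCDF c - stdNormalCDF (c - δB) ≤ δB := by
    have hs := strip (c - δB) c 1 (by linarith) zero_le_one fun x _ => pdf_le_one x
    have : (c - (c - δB)) * 1 = δB := by ring
    linarith
  have h2 : stdNormalCDF t - stdNormalCDF c ≤ δC / (1 - δC) := by
    rcases le_or_gt t 0 with ht | ht
    · have habs : |t| = -t := abs_of_nonpos ht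
      have hs := strip c t (gaussianPDFReal 0 1 t) hct (gaussianPDFReal_nonneg _ _ _)
        (fun x hx => pdf_mono (by
          rw [abs_of_nonpos ht, abs_of_nonpos (hx.2.trans ht)]; linarith [hx.2]))
      have hx1 : |t| * gaussianPDFReal 0 1 t ≤ 1 := abs_mul_pdf_le_one t
      have key : (t - c) * gaussianPDFReal 0 1 t
          = δC * (|t| * gaussianPDFReal 0 1 t) := by rw [hc]; ring
      have : (t - c) * gaussianPDFReal 0 1 t ≤ δC := by
        rw [key]; nlinarith
      linarith
    · have habs : |t| = t := abs_of_pos ht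
      have hc0 : 0 ≤ c := by rw [hc, habs]; nlinarith
      have hs := strip c t (gaussianPDFReal 0 1 c) hct (gaussianPDFReal_nonneg _ _ _)
        (fun x hx => pdf_mono (by
          rw [abs_of_nonneg hc0, abs_of_nonneg (hc0.trans hx.1.le)]; exact hx.1.le))
      have hx1 : |c| * gaussianPDFReal 0 1 c ≤ 1 := abs_mul_pdf_le_one c
      rw [abs_of_nonneg hc0] at hx1
      have key : (1 - δC) * ((t - c) * gaussianPDFReal 0 1 c)
          = δC * (c * gaussianPDFReal 0 1 c) := by rw [hc, habs]; ring
      have : (t - c) * gaussianPDFReal 0 1 c ≤ δC / (1 - δC) := by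
        rw [le_div_iff₀ h1C]
        nlinarith
      exact hs.trans this
  have : t - (δB + |t| * δC) = c - δB := by rw [hc]; ring
  rw [this]; linarith

/-- Normal-convergence transfer lemma (Lemma D.3): if `A` is close to standard normal
uniformly, and `|B| ≤ δ_B`, `|C| ≤ δ_C` with probability at least `1 − ε_{BC}`, then
`(A+B)/(1+C)` is close to standard normal uniformly, with the stated rate. -/
theorem stmt1 {Ω : Type*} [MeasurableSpace Ω] (μ : Measure Ω) [IsProbabilityMeasure μ]
    (A B C : Ω → ℝ)
    (hAmeas : Measurable A) (hBmeas : Measurable B) (hCmeas : Measurable C)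
    (εA εBC δB δC : ℝ)
    (hεA : εA ∈ Set.Ico (0 : ℝ) 1) (hεBC : εBC ∈ Set.Ico (0 : ℝ) 1)
    (hδB : δB ∈ Set.Ico (0 : ℝ) 1) (hδC : δC ∈ Set.Ico (0 : ℝ) 1)
    (hA : ∀ t : ℝ, |(μ {ω | A ω ≤ t}).toReal - stdNormalCDF t| ≤ εA)
    (hBC : ENNReal.ofReal (1 - εBC) ≤ μ {ω | |B ω| ≤ δB ∧ |C ω| ≤ δC}) :
    ∀ t : ℝ, |(μ {ω | (A ω + B ω) / (1 + C ω) ≤ t}).toReal - stdNormalCDF t|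
      ≤ δB + δC / (1 - δC) + εA + εBC := by
  obtain ⟨hεA0, hεA1⟩ := hεA
  obtain ⟨hεBC0, hεBC1⟩ := hεBC
  obtain ⟨hδB0, hδB1⟩ := hδB
  obtain ⟨hδC0, hδC1⟩ := hδC
  intro t
  set s := δB + |t| * δC with hs
  have hs0 : 0 ≤ s := by positivity
  set E := {ω | |B ω| ≤ δB ∧ |C ω| ≤ δC} with hE
  have hEmeas : MeasurableSet E := by
    have h1 : MeasurableSet {ω | |B ω| ≤ δB} := measurableSet_le hBmeas.abs measurable_const
    have h2 : MeasurableSet {ω | |C ω| ≤ δC} := measurableSet_le hCmeas.abs measurable_const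
    exact h1.inter h2
  have hE1 : 1 - εBC ≤ (μ E).toReal := by
    have := ENNReal.toReal_mono (measure_ne_top μ E) hBC
    rwa [ENNReal.toReal_ofReal (by linarith)] at this
  have hEc : (μ Eᶜ).toReal ≤ εBC := by
    rw [measure_compl hEmeas (measure_ne_top _ _), measure_univ,
      ENNReal.toReal_sub_of_le prob_le_one ENNReal.one_ne_top, ENNReal.toReal_one]
    linarith
  set S := {ω | (A ω + B ω) / (1 + C ω) ≤ t} with hS
  have hsub1 : S ⊆ {ω | A ω ≤ t + s} ∪ Eᶜ := by
    intro ω hω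
    by_cases hEω : ω ∈ E
    · left
      obtain ⟨hb, hc⟩ := hEω
      have hc' := abs_le.mp hc
      have hb' := abs_le.mp hb
      have h1C : 0 < 1 + C ω := by linarith [hc'.1]
      have hdiv := (div_le_iff₀ h1C).mp hω
      have htC : t * C ω ≤ |t| * δC := by
        calc t * C ω ≤ |t * C ω| := le_abs_self _
          _ = |t| * |C ω| := abs_mul _ _
          _ ≤ |t| * δC := mul_le_mul_of_nonneg_left hc (abs_nonneg t)
      have hexp : t * (1 + C ω) = t + t * C ω := by ring
      simp only [Set.mem_setOf_eq]
      rw [hs]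
      linarith [hb'.1]
    · right; exact hEω
  have hsub2 : {ω | A ω ≤ t - s} ⊆ S ∪ Eᶜ := by
    intro ω hω
    by_cases hEω : ω ∈ E
    · left
      obtain ⟨hb, hc⟩ := hEω
      have hc' := abs_le.mp hc
      have hb' := abs_le.mp hb
      have h1C : 0 < 1 + C ω := by linarith [hc'.1]
      have htC : -(|t| * δC) ≤ t * C ω := by
        have h2 : |t * C ω| ≤ |t| * δC := by
          rw [abs_mul]; exact mul_le_mul_of_nonneg_left hc (abs_nonneg t)
        linarith [neg_abs_le (t * C ω)]
      have hAω : A ω ≤ t - s := hω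
      have hexp : t * (1 + C ω) = t + t * C ω := by ring
      rw [hS, Set.mem_setOf_eq, div_le_iff₀ h1C, hexp]
      rw [hs] at hAω
      linarith [hb'.2]
    · right; exact hEω
  have m1 : (μ S).toReal ≤ (μ {ω | A ω ≤ t + s}).toReal + εBC := by
    have hle : μ S ≤ μ {ω | A ω ≤ t + s} + μ Eᶜ :=
      (measure_mono hsub1).trans (measure_union_le _ _)
    have := ENNReal.toReal_mono
      (ENNReal.add_ne_top.mpr ⟨measure_ne_top _ _, measure_ne_top _ _⟩) hle
    rw [ENNReal.toReal_add (measure_ne_top _ _) (measure_ne_top _ _)] at this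
    linarith
  have m2 : (μ {ω | A ω ≤ t - s}).toReal ≤ (μ S).toReal + εBC := by
    have hle : μ {ω | A ω ≤ t - s} ≤ μ S + μ Eᶜ :=
      (measure_mono hsub2).trans (measure_union_le _ _)
    have := ENNReal.toReal_mono
      (ENNReal.add_ne_top.mpr ⟨measure_ne_top _ _, measure_ne_top _ _⟩) hle
    rw [ENNReal.toReal_add (measure_ne_top _ _) (measure_ne_top _ _)] at this
    linarith
  have hA1 := abs_le.mp (hA (t + s))
  have hA2 := abs_le.mp (hA (t - s))
  have k1 : stdNormalCDF (t + s) - stdNormalCDF t ≤ δB + δC / (1 - δC) := by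
    rw [hs]; exact keyA hδB0 hδC0 hδC1 t
  have k2 : stdNormalCDF t - stdNormalCDF (t - s) ≤ δB + δC / (1 - δC) := by
    rw [hs]; exact keyB hδB0 hδC0 hδC1 t
  rw [abs_sub_le_iff]
  constructor
  · linarith [hA1.2]
  · linarith [hA2.1]
end

section
/- Let W be a real random variable with E[W] = 0, E[W²] ≥ C₀ > 0, and moment generating function bound E[e^{tW}] ≤ e^{C₁ t²/2} for all real t. Then P{W² ≥ C₀/2} ≥ 1/(16 e^{2C₁/C₀}). -/
open MeasureTheory ProbabilityTheory Real

/-!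
By the Paley–Zygmund argument for `W²` (split `E[W²]` at the level `C₀/2` and apply
Cauchy–Schwarz to `E[W² · 1{W² ≥ C₀/2}]`), it suffices to bound `E[W⁴]`. Squaring
`x² ≤ eˣ + e⁻ˣ` at `x = W/√C₀` bounds `W⁴/C₀²` by `e^{2W/√C₀} + 2 + e^{-2W/√C₀}`, whose
expectation is at most `4 e^{2C₁/C₀}` by the mgf bound.
-/

lemma sq_le_exp_add_exp_neg (x : ℝ) : x ^ 2 ≤ exp x + exp (-x) := by
  have key : ∀ y : ℝ, 0 ≤ y → y ^ 2 ≤ exp y + exp (-y) := by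
    intro y hy
    have cubic : 1 + y + y ^ 2 / 2 + y ^ 3 / 6 ≤ exp y := by
      simpa [Finset.sum_range_succ, Nat.factorial] using sum_le_exp_of_nonneg hy 4
    -- `2 + y³/6 - y²/2 = (y (y - 2)² + (y - 2)² + 8) / 6`
    nlinarith [one_sub_le_exp_neg y, mul_nonneg hy (sq_nonneg (y - 2))]
  rcases le_total 0 x with hx | hx
  · exact key x hx
  · simpa [add_comm] using key (-x) (neg_nonneg.2 hx)

lemma pow_four_le_exp_two_mul_add (x : ℝ) : x ^ 4 ≤ exp (2 * x) + 2 + exp (-(2 * x)) := by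
  have h : exp (2 * x) + 2 + exp (-(2 * x)) = (exp x + exp (-x)) ^ 2 := by
    have exp_sq : ∀ y, exp y ^ 2 = exp (2 * y) := fun y => by rw [sq, ← exp_add, two_mul]
    rw [add_sq, exp_sq, exp_sq, mul_assoc, ← exp_add, add_neg_cancel, exp_zero, mul_neg]; ring
  rw [h, show x ^ 4 = (x ^ 2) ^ 2 by ring]
  exact pow_le_pow_left₀ (sq_nonneg x) (sq_le_exp_add_exp_neg x) 2

section

variable {α : Type*} [MeasurableSpace α] {μ : Measure α}

lemma sq_setIntegral_le_setIntegral_sq_mul_measureReal [IsFiniteMeasure μ] {f : α → ℝ}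
    (hf : MemLp f 2 μ) (s : Set α) :
    (∫ x in s, f x ∂μ) ^ 2 ≤ (∫ x in s, f x ^ 2 ∂μ) * μ.real s := by
  have holder := integral_mul_norm_le_Lp_mul_Lq (μ := μ.restrict s) Real.HolderConjugate.two_two
    (f := f) (g := fun _ => (1 : ℝ)) (by simpa using hf.restrict s) (memLp_const 1)
  simp only [norm_one, mul_one, one_pow, integral_const, smul_eq_mul,
    measureReal_restrict_apply_univ, norm_eq_abs, rpow_two, sq_abs, ← sqrt_eq_rpow] at holder
  calc (∫ x in s, f x ∂μ) ^ 2 = |∫ x in s, f x ∂μ| ^ 2 := (sq_abs _).symm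
    _ ≤ (√(∫ x in s, f x ^ 2 ∂μ) * √(μ.real s)) ^ 2 := by
      gcongr
      exact (abs_integral_le_integral_abs).trans holder
    _ = (∫ x in s, f x ^ 2 ∂μ) * μ.real s := by
      rw [mul_pow, sq_sqrt (integral_nonneg fun x => sq_nonneg (f x)),
        sq_sqrt measureReal_nonneg]

lemma sq_integral_sub_le_integral_sq_mul_measureReal [IsProbabilityMeasure μ] {X : α → ℝ}
    (hXm : Measurable X) (hX : MemLp X 2 μ) {a : ℝ} (ha : 0 ≤ a)
    (haX : a ≤ ∫ x, X x ∂μ) :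
    (∫ x, X x ∂μ - a) ^ 2 ≤ (∫ x, X x ^ 2 ∂μ) * μ.real {x | a ≤ X x} := by
  set A := {x | a ≤ X x}
  have hA : MeasurableSet A := measurableSet_le measurable_const hXm
  have hXint : Integrable X μ := hX.integrable one_le_two
  have below_a_or_on_A : ∀ x, X x ≤ a + A.indicator X x := by
    intro x
    by_cases hx : x ∈ A
    · simpa [hx] using ha
    · simpa [hx, A] using (not_le.1 hx).le
  have split : ∫ x, X x ∂μ ≤ a + ∫ x in A, X x ∂μ := by
    calc ∫ x, X x ∂μ ≤ ∫ x, (a + A.indicator X x) ∂μ :=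
          integral_mono hXint ((integrable_const a).add (hXint.indicator hA)) below_a_or_on_A
      _ = a + ∫ x in A, X x ∂μ := by
          rw [integral_add (integrable_const a) (hXint.indicator hA), integral_indicator hA]
          simp
  have tail : (∫ x in A, X x ∂μ) ^ 2 ≤ (∫ x, X x ^ 2 ∂μ) * μ.real A :=
    (sq_setIntegral_le_setIntegral_sq_mul_measureReal hX A).trans <|
      mul_le_mul_of_nonneg_right
        (setIntegral_le_integral hX.integrable_sq (.of_forall fun x => sq_nonneg (X x)))
        measureReal_nonneg
  calc (∫ x, X x ∂μ - a) ^ 2 ≤ (∫ x in A, X x ∂μ) ^ 2 :=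
        pow_le_pow_left₀ (sub_nonneg.2 haX) (by linarith) 2
    _ ≤ _ := tail

lemma mul_integral_pow_four_le_mgf_add_mgf [IsProbabilityMeasure μ] {X : α → ℝ} (s : ℝ)
    (hpos : Integrable (fun x => exp (2 * s * X x)) μ)
    (hneg : Integrable (fun x => exp (-(2 * s) * X x)) μ) :
    s ^ 4 * ∫ x, X x ^ 4 ∂μ ≤ mgf X μ (2 * s) + 2 + mgf X μ (-(2 * s)) := by
  have pointwise : ∀ x, (s * X x) ^ 4 ≤ exp (2 * s * X x) + 2 + exp (-(2 * s) * X x) := by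
    intro x
    simpa only [mul_assoc, neg_mul] using pow_four_le_exp_two_mul_add (s * X x)
  calc s ^ 4 * ∫ x, X x ^ 4 ∂μ = ∫ x, (s * X x) ^ 4 ∂μ := by
        rw [← integral_const_mul]; simp only [mul_pow]
    _ ≤ ∫ x, (exp (2 * s * X x) + 2 + exp (-(2 * s) * X x)) ∂μ :=
        integral_mono_of_nonneg (.of_forall fun x => by positivity)
          ((hpos.add (integrable_const 2)).add hneg) (.of_forall pointwise)
    _ = mgf X μ (2 * s) + 2 + mgf X μ (-(2 * s)) := by
        rw [integral_add (f := fun x => exp (2 * s * X x) + 2) (hpos.add (integrable_const 2)) hneg,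
          integral_add hpos (integrable_const 2)]
        simp [mgf]

lemma integral_pow_four_le_of_mgf_le [IsProbabilityMeasure μ] {X : α → ℝ} {c v : ℝ} (hc : 0 ≤ c)
    (hv : 0 < v) (hint : ∀ t, Integrable (fun x => exp (t * X x)) μ)
    (hmgf : ∀ t, mgf X μ t ≤ exp (c * t ^ 2 / 2)) :
    ∫ x, X x ^ 4 ∂μ ≤ 4 * v ^ 2 * exp (2 * c / v) := by
  set s := (√v)⁻¹
  have hs2 : s ^ 2 = v⁻¹ := by rw [inv_pow, sq_sqrt hv.le]
  have hmgf_s : ∀ t, t ^ 2 = 4 * s ^ 2 → mgf X μ t ≤ exp (2 * c / v) := fun t ht => by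
    refine (hmgf t).trans (exp_le_exp.2 (le_of_eq ?_))
    rw [ht, hs2]; field_simp; ring
  have key := mul_integral_pow_four_le_mgf_add_mgf (μ := μ) (X := X) s (hint _) (hint _)
  rw [show s ^ 4 = (v ^ 2)⁻¹ by rw [show s ^ 4 = (s ^ 2) ^ 2 by ring, hs2, inv_pow],
    inv_mul_le_iff₀ (by positivity)] at key
  have hE : 1 ≤ exp (2 * c / v) := one_le_exp (by positivity)
  nlinarith [hmgf_s (2 * s) (by ring), hmgf_s (-(2 * s)) (by ring)]

end

theorem stmt2_general {Ω : Type*} [MeasurableSpace Ω] (μ : Measure Ω) [IsProbabilityMeasure μ]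
    (W : Ω → ℝ) (C₀ C₁ : ℝ) (hC₀ : 0 < C₀) (hC₁ : 0 < C₁)
    (hmeas : Measurable W)
    (hint : ∀ t : ℝ, Integrable (fun ω => Real.exp (t * W ω)) μ)
    (hvar : C₀ ≤ ∫ ω, (W ω) ^ 2 ∂μ)
    (hmgf : ∀ t : ℝ, ∫ ω, Real.exp (t * W ω) ∂μ ≤ Real.exp (C₁ * t ^ 2 / 2)) :
    ENNReal.ofReal (1 / (16 * Real.exp (2 * C₁ / C₀))) ≤ μ {ω | C₀ / 2 ≤ (W ω) ^ 2} := by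
  have hW4 := integral_pow_four_le_of_mgf_le hC₁.le hC₀ hint hmgf
  have hW2 : MemLp (fun ω => W ω ^ 2) 2 μ := by
    rw [memLp_two_iff_integrable_sq (hmeas.pow_const 2).aestronglyMeasurable]
    simpa only [← pow_mul] using
      integrable_pow_of_integrable_exp_mul one_ne_zero (hint 1) (hint (-1)) 4
  have hPZ := sq_integral_sub_le_integral_sq_mul_measureReal (μ := μ) (hmeas.pow_const 2) hW2
    (a := C₀ / 2) (by positivity) (by linarith)
  simp only [← pow_mul] at hPZ
  have key : (C₀ / 2) ^ 2 ≤ 4 * C₀ ^ 2 * exp (2 * C₁ / C₀) * μ.real {ω | C₀ / 2 ≤ W ω ^ 2} :=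
    (pow_le_pow_left₀ (by positivity) (by linarith) 2).trans
      (hPZ.trans (mul_le_mul_of_nonneg_right hW4 measureReal_nonneg))
  rw [measureReal_def] at key
  apply ENNReal.ofReal_le_of_le_toReal
  rw [div_le_iff₀ (by positivity)]
  nlinarith [sq_pos_of_pos hC₀]

/-- Lemma F.5: if `E[W] = 0`, `E[W²] ≥ C₀ > 0` and `E[e^{tW}] ≤ e^{C₁t²/2}` for all `t`,
then `P{W² ≥ C₀/2} ≥ 1/(16 e^{2C₁/C₀})`. -/
theorem stmt2 {Ω : Type*} [MeasurableSpace Ω] (μ : Measure Ω) [IsProbabilityMeasure μ]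
    (W : Ω → ℝ) (C₀ C₁ : ℝ) (hC₀ : 0 < C₀) (hC₁ : 0 < C₁)
    (hmeas : Measurable W)
    (hint : ∀ t : ℝ, Integrable (fun ω => Real.exp (t * W ω)) μ)
    (hmean : ∫ ω, W ω ∂μ = 0)
    (hvar : C₀ ≤ ∫ ω, (W ω) ^ 2 ∂μ)
    (hmgf : ∀ t : ℝ, ∫ ω, Real.exp (t * W ω) ∂μ ≤ Real.exp (C₁ * t ^ 2 / 2)) :
    ENNReal.ofReal (1 / (16 * Real.exp (2 * C₁ / C₀))) ≤ μ {ω | C₀ / 2 ≤ (W ω) ^ 2} :=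
  stmt2_general μ W C₀ C₁ hC₀ hC₁ hmeas hint hvar hmgf
end

section
/- For any matrix M ∈ ℝ^{p×p}, any vectors u, v ∈ ℝ^p, and any integer k ≥ 1, |uᵀMv| ≤ (‖u‖₂ + ‖u‖₁/√k)·(‖v‖₂ + ‖v‖₁/√k)·‖M‖_{S_k}, where ‖M‖_{S_k} = max{ u'ᵀMv' : u',v' unit vectors with at most k nonzero entries }. -/
open Matrix

/-- `u` is `k`-sparse: its support is contained in a set of at most `k` coordinates. -/
def kSparse {p : ℕ} (k : ℕ) (u : Fin p → ℝ) : Prop :=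
  ∃ s : Finset (Fin p), s.card ≤ k ∧ ∀ i ∉ s, u i = 0

/-- The sparse spectral norm `‖M‖_{S_k} = sup { uᵀMv : u,v ∈ S_k }`, where
`S_k` is the set of `k`-sparse vectors in the unit Euclidean ball. -/
noncomputable def sparseOpNorm (p k : ℕ) (M : Matrix (Fin p) (Fin p) ℝ) : ℝ :=
  sSup {x : ℝ | ∃ u v : Fin p → ℝ, (∑ i, (u i) ^ 2) ≤ 1 ∧ (∑ i, (v i) ^ 2) ≤ 1 ∧
    kSparse k u ∧ kSparse k v ∧ x = u ⬝ᵥ M.mulVec v}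

/-!
Split off the block `w` of the `k` entries of `u` of largest modulus. It is `k`-sparse, and every
remaining entry is at most the average modulus `‖w‖₁ / k` of the block, so each `k`-sparse piece of
the remainder has `ℓ₂`-norm at most `‖w‖₁ / √k`. Iterating, a functional bounded by `C ‖·‖₂` on
`k`-sparse vectors is bounded by `C ‖w‖₂ ≤ C ‖u‖₂` on the first block and by `C ‖·‖₁ / √k` summed
over the later blocks. Apply this once in each argument of the bilinear form `xᵀ M y`.
-/

open Finset

theorem Finset.exists_subset_card_eq_forall_le {ι β : Type*} [LinearOrder β] (f : ι → β)
    {S : Finset ι} {k : ℕ} (hk : k ≤ #S) :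
    ∃ T ⊆ S, #T = k ∧ ∀ i ∈ S, i ∉ T → ∀ t ∈ T, f i ≤ f t := by
  classical
  induction k with
  | zero => exact ⟨∅, empty_subset S, card_empty, by simp⟩
  | succ k ih =>
    obtain ⟨T, hTS, hTk, hT⟩ := ih (by omega)
    have hne : (S \ T).Nonempty := by
      rw [← card_pos, card_sdiff_of_subset hTS]; omega
    obtain ⟨m, hm, hmax⟩ := exists_max_image (S \ T) f hne
    rw [mem_sdiff] at hm
    refine ⟨insert m T, insert_subset hm.1 hTS, by rw [card_insert_of_notMem hm.2, hTk], ?_⟩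
    intro i hiS hiT t ht
    rw [mem_insert, not_or] at hiT
    rcases mem_insert.mp ht with rfl | ht
    · exact hmax i (mem_sdiff.mpr ⟨hiS, hiT.2⟩)
    · exact hT i hiS hiT.2 t ht

theorem exists_subset_card_eq_abs_le_sum_div {ι : Type*} {u : ι → ℝ} {S : Finset ι} {k : ℕ}
    (hu : ∀ i ∉ S, u i = 0) (hk : 0 < k) (hkS : k ≤ #S) :
    ∃ T ⊆ S, #T = k ∧ ∀ i ∉ T, |u i| ≤ (∑ t ∈ T, |u t|) / k := by
  obtain ⟨T, hTS, hTk, hT⟩ := exists_subset_card_eq_forall_le (fun i => |u i|) hkS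
  refine ⟨T, hTS, hTk, fun i hiT => ?_⟩
  by_cases hiS : i ∈ S
  · rw [le_div_iff₀ (by exact_mod_cast hk), ← hTk, mul_comm, ← nsmul_eq_mul]
    exact card_nsmul_le_sum T (fun t => |u t|) (|u i|) (hT i hiS hiT)
  · rw [hu i hiS, abs_zero]
    positivity

theorem Real.sqrt_sum_sq_le_sqrt_card_mul {ι : Type*} {T : Finset ι} {f : ι → ℝ} {m : ℝ}
    (hm : 0 ≤ m) (hf : ∀ i ∈ T, |f i| ≤ m) : √(∑ i ∈ T, f i ^ 2) ≤ √(#T : ℝ) * m := by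
  have hsum : ∑ i ∈ T, f i ^ 2 ≤ #T * m ^ 2 := by
    rw [← nsmul_eq_mul]
    refine sum_le_card_nsmul T _ _ fun i hi => ?_
    rw [← sq_abs]
    exact pow_le_pow_left₀ (abs_nonneg _) (hf i hi) 2
  calc √(∑ i ∈ T, f i ^ 2) ≤ √(#T * m ^ 2) := Real.sqrt_le_sqrt hsum
    _ = √(#T : ℝ) * m := by rw [Real.sqrt_mul (Nat.cast_nonneg _), Real.sqrt_sq hm]

section
variable {ι E : Type*} [Fintype ι] [SeminormedAddCommGroup E] {k : ℕ} {C : ℝ}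

theorem AddMonoidHom.norm_le_of_forall_sparse_of_le (L : (ι → ℝ) →+ E) (hk : 1 ≤ k) (hC : 0 ≤ C)
    (hL : ∀ T : Finset ι, #T ≤ k → ∀ w : ι → ℝ, (∀ i ∉ T, w i = 0) → ‖L w‖ ≤ C * √(∑ i, w i ^ 2))
    (S : Finset ι) (u : ι → ℝ) (hu : ∀ i ∉ S, u i = 0) (x : ℝ)
    (hx : ∀ T : Finset ι, #T ≤ k → √(∑ i ∈ T, u i ^ 2) ≤ x) :
    ‖L u‖ ≤ C * (x + (∑ i, |u i|) / √k) := by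
  classical
  induction S using Finset.strongInduction generalizing u x with
  | H S ih =>
    by_cases hSk : #S ≤ k
    · have hsum : ∑ i, u i ^ 2 = ∑ i ∈ S, u i ^ 2 :=
        (sum_subset (subset_univ S) fun i _ hi => by simp [hu i hi]).symm
      have hl1 : 0 ≤ (∑ i, |u i|) / √k := by positivity
      calc ‖L u‖ ≤ C * √(∑ i, u i ^ 2) := hL S hSk u hu
        _ ≤ C * (x + (∑ i, |u i|) / √k) := by
          rw [hsum]; gcongr; linarith [hx S hSk]
    obtain ⟨T, hTS, hTk, hT⟩ := exists_subset_card_eq_abs_le_sum_div hu hk (not_le.mp hSk).le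
    set head : ι → ℝ := fun i => if i ∈ T then u i else 0
    set tail : ι → ℝ := fun i => if i ∈ T then 0 else u i
    set m := (∑ t ∈ T, |u t|) / k
    have hm : 0 ≤ m := by positivity
    have hhead : ‖L head‖ ≤ C * x := by
      have hsum : ∑ i, head i ^ 2 = ∑ i ∈ T, u i ^ 2 := by simp [head, ite_pow, sum_ite_mem]
      calc ‖L head‖ ≤ C * √(∑ i, head i ^ 2) := hL T hTk.le head fun i hi => by simp [head, hi]
        _ ≤ C * x := by rw [hsum]; gcongr; exact hx T hTk.le
    -- the entries of the tail are bounded by the average `m` of the head, so `√k * m` is a new `x`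
    have htail : ‖L tail‖ ≤ C * (√k * m + (∑ i, |tail i|) / √k) := by
      refine ih (S \ T) (sdiff_ssubset hTS (card_pos.mp (by omega))) tail (fun i hi => ?_) _
        fun T' hT' => ?_
      · by_cases hiT : i ∈ T
        · simp [tail, hiT]
        · simp [tail, hiT, hu i (by simpa [hiT] using hi)]
      · calc √(∑ i ∈ T', tail i ^ 2) ≤ √(#T' : ℝ) * m :=
              Real.sqrt_sum_sq_le_sqrt_card_mul hm fun i _ => by
                by_cases hiT : i ∈ T <;> simp [tail, hiT, hm, hT i]
          _ ≤ √k * m := by gcongr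
    have hl1_split : ∑ i, |u i| = ∑ t ∈ T, |u t| + ∑ i, |tail i| := by
      rw [← sum_add_sum_compl T]
      simp [tail, apply_ite, sum_ite, filter_not, compl_eq_univ_sdiff]
    have hm_eq : √k * m = (∑ t ∈ T, |u t|) / √k := by
      rw [mul_div_left_comm, Real.sqrt_div_self', mul_one_div]
    have hsplit : u = head + tail := by ext i; by_cases hi : i ∈ T <;> simp [head, tail, hi]
    calc ‖L u‖ ≤ ‖L head‖ + ‖L tail‖ := by rw [hsplit, map_add]; exact norm_add_le _ _
      _ ≤ C * x + C * (√k * m + (∑ i, |tail i|) / √k) := add_le_add hhead htail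
      _ = C * (x + (∑ i, |u i|) / √k) := by rw [hm_eq, hl1_split]; ring

theorem AddMonoidHom.norm_le_of_forall_sparse (L : (ι → ℝ) →+ E) (hk : 1 ≤ k) (hC : 0 ≤ C)
    (hL : ∀ T : Finset ι, #T ≤ k → ∀ w : ι → ℝ, (∀ i ∉ T, w i = 0) → ‖L w‖ ≤ C * √(∑ i, w i ^ 2))
    (u : ι → ℝ) : ‖L u‖ ≤ C * (√(∑ i, u i ^ 2) + (∑ i, |u i|) / √k) :=
  L.norm_le_of_forall_sparse_of_le hk hC hL univ u (fun i hi => absurd (mem_univ i) hi) _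
    fun _ _ => Real.sqrt_le_sqrt (sum_le_univ_sum_of_nonneg fun i => sq_nonneg (u i))

end

theorem abs_le_sqrt_sum_sq {ι : Type*} [Fintype ι] (x : ι → ℝ) (i : ι) :
    |x i| ≤ √(∑ j, x j ^ 2) :=
  Real.abs_le_sqrt (single_le_sum (fun j _ => sq_nonneg (x j)) (mem_univ i))

theorem sum_sq_inv_sqrt_smul_le_one {ι : Type*} [Fintype ι] (x : ι → ℝ) :
    ∑ i, ((√(∑ j, x j ^ 2))⁻¹ • x) i ^ 2 ≤ 1 := by
  simp only [Pi.smul_apply, smul_eq_mul, mul_pow, ← mul_sum, inv_pow,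
    Real.sq_sqrt (sum_nonneg fun j _ => sq_nonneg (x j))]
  exact inv_mul_le_one_of_le₀ le_rfl (sum_nonneg fun j _ => sq_nonneg (x j))

theorem kSparse.smul {p k : ℕ} {x : Fin p → ℝ} (hx : kSparse k x) (c : ℝ) : kSparse k (c • x) := by
  obtain ⟨s, hs, hxs⟩ := hx
  exact ⟨s, hs, fun i hi => by simp [hxs i hi]⟩

theorem abs_dotProduct_mulVec_le_sum_abs {p : ℕ} (M : Matrix (Fin p) (Fin p) ℝ) {x y : Fin p → ℝ}
    (hx : ∀ i, |x i| ≤ 1) (hy : ∀ j, |y j| ≤ 1) : |x ⬝ᵥ M *ᵥ y| ≤ ∑ i, ∑ j, |M i j| := by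
  have hexpand : x ⬝ᵥ M *ᵥ y = ∑ i, ∑ j, x i * M i j * y j := by
    simp [dotProduct, mulVec, mul_sum, mul_assoc]
  rw [hexpand]
  refine (abs_sum_le_sum_abs _ _).trans (sum_le_sum fun i _ => ?_)
  refine (abs_sum_le_sum_abs _ _).trans (sum_le_sum fun j _ => ?_)
  rw [abs_mul, abs_mul]
  calc |x i| * |M i j| * |y j| ≤ 1 * |M i j| * 1 := by gcongr <;> simp [hx, hy]
    _ = |M i j| := by ring

theorem le_sparseOpNorm {p k : ℕ} (M : Matrix (Fin p) (Fin p) ℝ) {x y : Fin p → ℝ}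
    (hx₁ : ∑ i, x i ^ 2 ≤ 1) (hy₁ : ∑ i, y i ^ 2 ≤ 1) (hx : kSparse k x) (hy : kSparse k y) :
    x ⬝ᵥ M *ᵥ y ≤ sparseOpNorm p k M := by
  refine le_csSup ⟨∑ i, ∑ j, |M i j|, ?_⟩ ⟨x, y, hx₁, hy₁, hx, hy, rfl⟩
  rintro _ ⟨u, v, hu, hv, -, -, rfl⟩
  refine (le_abs_self _).trans (abs_dotProduct_mulVec_le_sum_abs M (fun i => ?_) fun j => ?_)
  · exact (abs_le_sqrt_sum_sq u i).trans (Real.sqrt_le_one.mpr hu)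
  · exact (abs_le_sqrt_sum_sq v j).trans (Real.sqrt_le_one.mpr hv)

theorem sparseOpNorm_nonneg (p k : ℕ) (M : Matrix (Fin p) (Fin p) ℝ) : 0 ≤ sparseOpNorm p k M := by
  simpa using le_sparseOpNorm (k := k) M (x := 0) (y := 0) (by simp) (by simp)
    ⟨∅, by simp, fun _ _ => rfl⟩ ⟨∅, by simp, fun _ _ => rfl⟩

theorem eq_zero_of_sqrt_sum_sq_eq_zero {ι : Type*} [Fintype ι] {x : ι → ℝ}
    (hx : √(∑ j, x j ^ 2) = 0) : x = 0 :=
  funext fun i => abs_nonpos_iff.mp ((abs_le_sqrt_sum_sq x i).trans hx.le)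

theorem dotProduct_mulVec_le_of_kSparse {p k : ℕ} (M : Matrix (Fin p) (Fin p) ℝ) {x y : Fin p → ℝ}
    (hx : kSparse k x) (hy : kSparse k y) :
    x ⬝ᵥ M *ᵥ y ≤ √(∑ i, x i ^ 2) * √(∑ i, y i ^ 2) * sparseOpNorm p k M := by
  rcases (Real.sqrt_nonneg (∑ i, x i ^ 2)).eq_or_lt with ha | ha
  · simp [eq_zero_of_sqrt_sum_sq_eq_zero ha.symm]
  rcases (Real.sqrt_nonneg (∑ i, y i ^ 2)).eq_or_lt with hb | hb
  · simp [eq_zero_of_sqrt_sum_sq_eq_zero hb.symm]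
  have hunit := le_sparseOpNorm M (sum_sq_inv_sqrt_smul_le_one x)
    (sum_sq_inv_sqrt_smul_le_one y) (hx.smul _) (hy.smul _)
  rw [smul_dotProduct, mulVec_smul, dotProduct_smul, smul_eq_mul, smul_eq_mul,
    ← mul_assoc, ← mul_inv, inv_mul_le_iff₀ (by positivity)] at hunit
  exact hunit

theorem abs_dotProduct_mulVec_le_of_kSparse {p k : ℕ} (M : Matrix (Fin p) (Fin p) ℝ)
    {x y : Fin p → ℝ} (hx : kSparse k x) (hy : kSparse k y) :
    |x ⬝ᵥ M *ᵥ y| ≤ √(∑ i, x i ^ 2) * √(∑ i, y i ^ 2) * sparseOpNorm p k M := by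
  refine abs_le.mpr ⟨?_, dotProduct_mulVec_le_of_kSparse M hx hy⟩
  have := dotProduct_mulVec_le_of_kSparse M (by simpa using hx.smul (-1)) hy
  simp only [Pi.neg_apply, neg_sq, neg_dotProduct] at this
  linarith

/-- Lemma 4.9: for any matrix `M`, vectors `u, v` and `k ≥ 1`,
`|uᵀMv| ≤ (‖u‖₂ + ‖u‖₁/√k)(‖v‖₂ + ‖v‖₁/√k)·‖M‖_{S_k}`. -/
theorem stmt6 (p k : ℕ) (hk : 1 ≤ k) (M : Matrix (Fin p) (Fin p) ℝ) (u v : Fin p → ℝ) :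
    |u ⬝ᵥ M.mulVec v| ≤
      (Real.sqrt (∑ i, (u i) ^ 2) + (∑ i, |u i|) / Real.sqrt k) *
        (Real.sqrt (∑ i, (v i) ^ 2) + (∑ i, |v i|) / Real.sqrt k) *
        sparseOpNorm p k M := by
  set N := sparseOpNorm p k M
  have hN : 0 ≤ N := sparseOpNorm_nonneg p k M
  have hsparse : ∀ x, kSparse k x → ∀ w : Fin p → ℝ,
      |x ⬝ᵥ M *ᵥ w| ≤ √(∑ i, x i ^ 2) * N * (√(∑ i, w i ^ 2) + (∑ i, |w i|) / √k) :=
    fun x hx => (AddMonoidHom.mk' (x ⬝ᵥ M *ᵥ ·) fun y z => by simp [mulVec_add])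
      |>.norm_le_of_forall_sparse (C := √(∑ i, x i ^ 2) * N) hk (by positivity)
        fun T hT w hw => (abs_dotProduct_mulVec_le_of_kSparse M hx ⟨T, hT, hw⟩).trans_eq (by ring)
  have hu := (AddMonoidHom.mk' (· ⬝ᵥ M *ᵥ v) fun x y => add_dotProduct x y _)
    |>.norm_le_of_forall_sparse (C := N * (√(∑ i, v i ^ 2) + (∑ i, |v i|) / √k)) hk
      (by positivity) (fun T hT w hw => (hsparse w ⟨T, hT, hw⟩ v).trans_eq (by ring)) u
  exact hu.trans_eq (by ring)
end

section
/- If a random matrix A ∈ ℝ^{p×p} satisfies E[exp{t·uᵀAu}] ≤ exp(c₁t²/n) for all |t| ≤ c₀n and all unit vectors u ∈ ℝ^p, then for any k ≥ 1 and δ ∈ (0,1) with log(2/δ) + k log(12p) ≤ n c₀² c₁, with probability at least 1 − δ, |uᵀAu| ≤ √( (16c₁/n)(log(2/δ) + k log(12p)) ) for all k-sparse unit vectors u ∈ ℝ^p. -/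
/-!
For a support `S` of size `min k p`, comparing volumes of disjoint balls gives a `1/4`-net of the
unit sphere of `ℝ^S` with at most `9^|S|` points. If a quadratic form is bounded by `b` on an
`ε`-net of the sphere, polarization shows that its supremum `Q` over the sphere satisfies
`Q ≤ b + 2εQ`, hence `Q ≤ 2b` for `ε = 1/4`. Over all `(p choose m) ≤ p^k` supports the nets have
at most `(12p)^k` points. With `L = log(2/δ) + k log(12p)` and `ε` the claimed bound, the Chernoff
bound with `t = nε/(4c₁)` (admissible exactly when `L ≤ n c₀² c₁`) shows that a net point violates
`|vᵀAv| ≤ ε/2` with probability at most `2e^{-L} = δ/(12p)^k`, and a union bound finishes.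
-/

open MeasureTheory ProbabilityTheory Matrix Real

open Metric Module Finset
open scoped NNReal ENNReal

namespace Metric

variable {E : Type*} [NormedAddCommGroup E] [NormedSpace ℝ E] [FiniteDimensional ℝ E]
  {ε : ℝ≥0}

theorem IsSeparated.card_le_of_subset_closedBall (hε : 0 < ε) {C : Finset E}
    (hC : (C : Set E) ⊆ closedBall 0 1) (hsep : IsSeparated ε (C : Set E)) :
    (C.card : ℝ) ≤ (1 + 2 / (ε : ℝ)) ^ finrank ℝ E := by
  borelize E
  set μ : Measure E := Measure.addHaar
  set d := finrank ℝ E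
  have hr : (0 : ℝ) < ε / 2 := by positivity
  have hball : ∀ (x : E) {r : ℝ}, 0 < r → μ.real (ball x r) = r ^ d * μ.real (ball 0 1) := by
    intro x r hr
    rw [measureReal_def, Measure.addHaar_ball_of_pos μ x hr, ENNReal.toReal_mul,
      ENNReal.toReal_ofReal (by positivity), measureReal_def]
  have hdisj : (C : Set E).PairwiseDisjoint (ball · (ε / 2)) := by
    intro x hx y hy hxy
    have : (ε : ℝ≥0∞) < edist x y := hsep hx hy hxy
    rw [edist_dist, ← ENNReal.ofReal_coe_nnreal,
      ENNReal.ofReal_lt_ofReal_iff (dist_pos.2 hxy)] at this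
    exact ball_disjoint_ball (by linarith)
  have hsub : (⋃ x ∈ C, ball x (ε / 2)) ⊆ ball 0 (1 + ε / 2) := by
    refine Set.iUnion₂_subset fun x hx => ball_subset_ball' ?_
    rw [dist_zero_right]
    linarith [mem_closedBall_zero_iff.1 (hC hx)]
  have hvol : 0 < μ.real (ball 0 1) :=
    ENNReal.toReal_pos (measure_ball_pos μ 0 one_pos).ne' measure_ball_lt_top.ne
  have hcard : C.card * (ε / 2 : ℝ) ^ d * μ.real (ball 0 1)
      ≤ (1 + ε / 2) ^ d * μ.real (ball 0 1) :=
    calc C.card * (ε / 2 : ℝ) ^ d * μ.real (ball 0 1)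
        = ∑ x ∈ C, μ.real (ball x (ε / 2)) := by simp [hball _ hr, mul_assoc]
      _ = μ.real (⋃ x ∈ C, ball x (ε / 2)) :=
          (measureReal_biUnion_finset hdisj fun _ _ => measurableSet_ball).symm
      _ ≤ μ.real (ball 0 (1 + ε / 2)) := measureReal_mono hsub
      _ = (1 + ε / 2) ^ d * μ.real (ball 0 1) := hball 0 (by positivity)
  have hratio : (1 + 2 / (ε : ℝ)) ^ d = (1 + ε / 2) ^ d / (ε / 2) ^ d := by
    rw [← div_pow]
    congr 1
    field_simp
    ring
  rw [hratio, le_div_iff₀ (by positivity)]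
  exact le_of_mul_le_mul_right hcard hvol

theorem packingNumber_le_of_subset_closedBall (hε : 0 < ε) {A : Set E}
    (hA : A ⊆ closedBall 0 1) :
    packingNumber ε A ≤ ⌊(1 + 2 / (ε : ℝ)) ^ finrank ℝ E⌋₊ := by
  set M := ⌊(1 + 2 / (ε : ℝ)) ^ finrank ℝ E⌋₊
  refine iSup₂_le fun C hCA => iSup_le fun hsep => ?_
  by_contra! hlt
  obtain ⟨D, hDC, hD⟩ := Set.exists_subset_encard_eq (Order.add_one_le_of_lt hlt)
  have hDfin : D.Finite := Set.finite_of_encard_eq_coe hD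
  have hDC' : (hDfin.toFinset : Set E) ⊆ C := by simpa using hDC
  have hcard := (hsep.subset hDC').card_le_of_subset_closedBall hε (hDC'.trans (hCA.trans hA))
  rw [hDfin.encard_eq_coe_toFinset_card] at hD
  have : hDfin.toFinset.card = M + 1 := by exact_mod_cast hD
  have := Nat.le_floor hcard
  omega

theorem exists_finset_isCover_card_le (hε : 0 < ε) {A : Set E} (hA : A ⊆ closedBall 0 1) :
    ∃ N : Finset E, (N : Set E) ⊆ A ∧ IsCover ε A N ∧
      (N.card : ℝ) ≤ (1 + 2 / (ε : ℝ)) ^ finrank ℝ E := by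
  have hpack := packingNumber_le_of_subset_closedBall hε hA
  have hne : packingNumber ε A ≠ ⊤ := ne_top_of_le_ne_top (by simp) hpack
  have hfin : (maximalSeparatedSet ε A).Finite :=
    Set.encard_ne_top_iff.1 (encard_maximalSeparatedSet hne ▸ hne)
  refine ⟨hfin.toFinset, by simpa using maximalSeparatedSet_subset,
    by simpa using isCover_maximalSeparatedSet hne, ?_⟩
  have : (hfin.toFinset.card : ℕ∞) ≤ ⌊(1 + 2 / (ε : ℝ)) ^ finrank ℝ E⌋₊ := by
    rw [← hfin.encard_eq_coe_toFinset_card, encard_maximalSeparatedSet hne]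
    exact hpack
  exact (Nat.cast_le.2 (by exact_mod_cast this)).trans (Nat.floor_le (by positivity))

end Metric

namespace ContinuousLinearMap

variable {E : Type*} [NormedAddCommGroup E] [InnerProductSpace ℝ E] (B : E →L[ℝ] E →L[ℝ] ℝ)

theorem abs_apply_self_le_mul_norm_sq {Q : ℝ} (hQ : ∀ u ∈ sphere (0 : E) 1, |B u u| ≤ Q)
    (w : E) : |B w w| ≤ Q * ‖w‖ ^ 2 := by
  rcases eq_or_ne w 0 with rfl | hw
  · simp
  have hw' : 0 < ‖w‖ := norm_pos_iff.2 hw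
  have h := hQ (‖w‖⁻¹ • w) (by simp [norm_smul, hw'.ne'])
  simp only [map_smul, _root_.smul_apply, smul_eq_mul, abs_mul, abs_inv, abs_norm] at h
  calc |B w w| = ‖w‖ ^ 2 * (‖w‖⁻¹ * (‖w‖⁻¹ * |B w w|)) := by field_simp
    _ ≤ ‖w‖ ^ 2 * Q := by gcongr
    _ = Q * ‖w‖ ^ 2 := mul_comm _ _

theorem abs_apply_self_sub_apply_self_le {Q : ℝ} (hQ : ∀ w, |B w w| ≤ Q * ‖w‖ ^ 2) (u v : E)
    {r : ℝ} (hr : 0 < r) :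
    |B u u - B v v| ≤ Q / 2 * (‖u + v‖ ^ 2 / r + r * ‖u - v‖ ^ 2) := by
  set x := u + v
  set y := r • (u - v)
  have hpolar : B (x + y) (x + y) - B (x - y) (x - y) = 4 * r * (B u u - B v v) := by
    simp only [x, y, map_add, map_sub, map_smul, _root_.add_apply, _root_.sub_apply,
      _root_.smul_apply, smul_eq_mul]
    ring
  have hpar := parallelogram_law_with_norm ℝ x y
  rw [norm_smul, Real.norm_eq_abs, abs_of_pos hr] at hpar
  have : 4 * r * |B u u - B v v| ≤ 2 * Q * (‖x‖ ^ 2 + r ^ 2 * ‖u - v‖ ^ 2) :=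
    calc 4 * r * |B u u - B v v| = |B (x + y) (x + y) - B (x - y) (x - y)| := by
          rw [hpolar, abs_mul, abs_of_pos (show 0 < 4 * r by positivity)]
      _ ≤ |B (x + y) (x + y)| + |B (x - y) (x - y)| := abs_sub _ _
      _ ≤ Q * ‖x + y‖ ^ 2 + Q * ‖x - y‖ ^ 2 := add_le_add (hQ _) (hQ _)
      _ = 2 * Q * (‖x‖ ^ 2 + r ^ 2 * ‖u - v‖ ^ 2) := by rw [← mul_add, hpar]; ring
  rw [show Q / 2 * (‖x‖ ^ 2 / r + r * ‖u - v‖ ^ 2)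
      = 2 * Q * (‖x‖ ^ 2 + r ^ 2 * ‖u - v‖ ^ 2) / (4 * r) by field_simp; ring,
    le_div_iff₀ (by positivity)]
  linarith

theorem abs_apply_self_le_of_isCover {ε : ℝ≥0} (hε : 0 < ε) (hε' : ε < 1 / 2) {N : Set E}
    (hN : N ⊆ sphere 0 1) (hcover : IsCover ε (sphere (0 : E) 1) N) {b : ℝ}
    (hb : ∀ v ∈ N, |B v v| ≤ b) {u : E} (hu : u ∈ sphere (0 : E) 1) :
    |B u u| ≤ b / (1 - 2 * ε) := by
  set Q := sSup ((fun w => |B w w|) '' sphere 0 1)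
  have hbdd : BddAbove ((fun w => |B w w|) '' sphere (0 : E) 1) := by
    refine ⟨‖B‖, ?_⟩
    rintro _ ⟨w, hw, rfl⟩
    simpa [mem_sphere_zero_iff_norm.1 hw] using B.le_opNorm₂ w w
  have hQ : ∀ w ∈ sphere (0 : E) 1, |B w w| ≤ Q := fun w hw => le_csSup hbdd ⟨w, hw, rfl⟩
  have hQ0 : 0 ≤ Q := (abs_nonneg _).trans (hQ u hu)
  have hstep : ∀ w ∈ sphere (0 : E) 1, |B w w| ≤ b + 2 * ε * Q := by
    intro w hw
    obtain ⟨v, hvN, hwv⟩ :=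
      Set.mem_iUnion₂.1 (isCover_iff_subset_iUnion_closedBall.1 hcover hw)
    have hv := hN hvN
    rw [mem_sphere_zero_iff_norm] at hw hv
    have hsum : ‖w + v‖ ≤ 2 := (norm_add_le _ _).trans (by rw [hw, hv]; norm_num)
    have hdiff : ‖w - v‖ ≤ ε := by rwa [← dist_eq_norm]
    -- `r = 2 / ε` balances the two terms of the polarization bound
    have hpol := B.abs_apply_self_sub_apply_self_le (B.abs_apply_self_le_mul_norm_sq hQ) w v
      (r := 2 / ε) (by positivity)
    have : Q / 2 * (‖w + v‖ ^ 2 / (2 / ε) + 2 / ε * ‖w - v‖ ^ 2) ≤ 2 * ε * Q :=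
      calc Q / 2 * (‖w + v‖ ^ 2 / (2 / ε) + 2 / ε * ‖w - v‖ ^ 2)
          ≤ Q / 2 * (2 ^ 2 / (2 / ε) + 2 / ε * ε ^ 2) := by gcongr
        _ = 2 * ε * Q := by field_simp; ring
    linarith [abs_sub_abs_le_abs_sub (B w w) (B v v), hb v hvN]
  have hQle : Q ≤ b + 2 * ε * Q :=
    csSup_le ⟨_, u, hu, rfl⟩ (by rintro _ ⟨w, hw, rfl⟩; exact hstep w hw)
  rw [le_div_iff₀ (by linarith [(show (ε : ℝ) < 1 / 2 from mod_cast hε')])]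
  nlinarith [hQ u hu]

end ContinuousLinearMap

namespace EuclideanSpace

variable {ι : Type*} [Fintype ι]

def supported (S : Finset ι) : Submodule ℝ (EuclideanSpace ℝ ι) where
  carrier := {x | ∀ i ∉ S, x i = 0}
  add_mem' hx hy i hi := by simp [hx i hi, hy i hi]
  zero_mem' _ _ := rfl
  smul_mem' c x hx i hi := by simp [hx i hi]

theorem finrank_supported_le (S : Finset ι) : finrank ℝ (supported S) ≤ S.card := by
  let restrict : supported S →ₗ[ℝ] (S → ℝ) :=
    LinearMap.pi fun i => (proj (𝕜 := ℝ) (i : ι)).toLinearMap ∘ₗ (supported S).subtype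
  have hinj : Function.Injective restrict := by
    intro x y hxy
    ext i
    by_cases hi : i ∈ S
    · exact congr_fun hxy ⟨i, hi⟩
    · rw [x.2 i hi, y.2 i hi]
  simpa using LinearMap.finrank_le_finrank_of_injective hinj

theorem norm_eq_one_iff (x : EuclideanSpace ℝ ι) : ‖x‖ = 1 ↔ ∑ i, x i ^ 2 = 1 := by
  rw [← pow_eq_one_iff_of_nonneg (norm_nonneg x) two_ne_zero, real_norm_sq_eq]

end EuclideanSpace

noncomputable def Matrix.euclideanBilin {ι : Type*} [Fintype ι] [DecidableEq ι]
    (M : Matrix ι ι ℝ) : EuclideanSpace ℝ ι →L[ℝ] EuclideanSpace ℝ ι →L[ℝ] ℝ :=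
  (innerSL ℝ).bilinearComp (.id ℝ _) (LinearMap.toContinuousLinearMap M.toEuclideanLin)

@[simp]
theorem Matrix.euclideanBilin_apply {ι : Type*} [Fintype ι] [DecidableEq ι] (M : Matrix ι ι ℝ)
    (x y : EuclideanSpace ℝ ι) : M.euclideanBilin x y = x.ofLp ⬝ᵥ M *ᵥ y.ofLp := by
  simp [euclideanBilin, EuclideanSpace.inner_eq_star_dotProduct, dotProduct_comm]

open EuclideanSpace

theorem exists_sparse_net (p k : ℕ) (hp : 1 ≤ p) :
    ∃ N : ∀ S : Finset (Fin p), Finset (supported S),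
      (∀ S, (N S : Set (supported S)) ⊆ sphere 0 1) ∧
      (∀ S, IsCover (1 / 4) (sphere 0 1) (N S : Set (supported S))) ∧
      (((univ.powersetCard (min k p)).sigma N).card : ℝ) ≤ (12 * p) ^ k := by
  choose N hNsub hNcover hNcard using fun S : Finset (Fin p) =>
    exists_finset_isCover_card_le (E := supported S) (ε := 1 / 4) (by norm_num)
      sphere_subset_closedBall
  refine ⟨N, hNsub, hNcover, ?_⟩
  set m := min k p
  have hcard : ∀ S ∈ univ.powersetCard m, ((N S).card : ℝ) ≤ 9 ^ m := by
    intro S hS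
    refine (hNcard S).trans ?_
    rw [← (mem_powersetCard.1 hS).2, show 1 + 2 / ((1 / 4 : ℝ≥0) : ℝ) = 9 by norm_num]
    exact pow_le_pow_right₀ (by norm_num) (finrank_supported_le S)
  have hp' : (1 : ℝ) ≤ p := by exact_mod_cast hp
  rw [card_sigma, Nat.cast_sum]
  calc ∑ S ∈ univ.powersetCard m, ((N S).card : ℝ)
      ≤ p.choose m * 9 ^ m := by simpa using sum_le_card_nsmul _ _ _ hcard
    _ ≤ (9 * p) ^ m := by
        rw [mul_pow, mul_comm]
        gcongr
        exact_mod_cast Nat.choose_le_pow p m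
    _ ≤ (12 * p) ^ m := by gcongr; norm_num
    _ ≤ (12 * p) ^ k := pow_le_pow_right₀ (by linarith) (min_le_left k p)

theorem abs_dotProduct_mulVec_le_of_sparse_net {p k : ℕ} (M : Matrix (Fin p) (Fin p) ℝ)
    {N : ∀ S : Finset (Fin p), Finset (supported S)}
    (hN : ∀ S, (N S : Set (supported S)) ⊆ sphere 0 1)
    (hcover : ∀ S, IsCover (1 / 4) (sphere 0 1) (N S : Set (supported S))) {b : ℝ}
    (hb : ∀ x ∈ (univ.powersetCard (min k p)).sigma N,
      |(x.2 : EuclideanSpace ℝ (Fin p)).ofLp ⬝ᵥ M *ᵥ (x.2 : EuclideanSpace ℝ (Fin p)).ofLp| ≤ b)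
    {u : Fin p → ℝ} (hu : ∑ i, u i ^ 2 = 1) (hsparse : kSparse k u) :
    |u ⬝ᵥ M *ᵥ u| ≤ 2 * b := by
  obtain ⟨s, hsk, hsu⟩ := hsparse
  obtain ⟨S, hsS, -, hS⟩ := exists_subsuperset_card_eq (n := min k p) (subset_univ s)
    (le_min hsk ((card_le_univ s).trans_eq (Fintype.card_fin p))) (by simp)
  let x : supported S := ⟨WithLp.toLp 2 u, fun i hi => hsu i fun h => hi (hsS h)⟩
  have hx : x ∈ sphere 0 1 := by
    rwa [mem_sphere_zero_iff_norm, Submodule.coe_norm, norm_eq_one_iff]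
  have := (M.euclideanBilin.bilinearComp (supported S).subtypeL
    (supported S).subtypeL).abs_apply_self_le_of_isCover (by norm_num) (by norm_num) (hN S)
    (hcover S) (fun v hv => by
      simpa using hb ⟨S, v⟩ (mem_sigma.2 ⟨mem_powersetCard.2 ⟨subset_univ _, hS⟩, hv⟩)) hx
  calc |u ⬝ᵥ M *ᵥ u| ≤ b / (1 - 2 * ((1 / 4 : ℝ≥0) : ℝ)) := by simpa using this
    _ = 2 * b := by norm_num; ring

section Probability

variable {Ω : Type*} [MeasurableSpace Ω] {μ : Measure Ω}

theorem measureReal_le_abs_le_of_mgf_le [IsFiniteMeasure μ] {X : Ω → ℝ} {c T : ℝ} (hc : 0 < c)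
    (hint : ∀ t, |t| ≤ T → Integrable (fun ω => exp (t * X ω)) μ)
    (hmgf : ∀ t, |t| ≤ T → mgf X μ t ≤ exp (c * t ^ 2)) (hT : 0 ≤ T) {L : ℝ}
    (hL : 0 ≤ L) (hLT : L ≤ c * T ^ 2) :
    μ.real {ω | √(4 * c * L) ≤ |X ω|} ≤ 2 * exp (-L) := by
  set ε := √(4 * c * L)
  set t := ε / (2 * c)
  have hε2 : ε ^ 2 = 4 * c * L := sq_sqrt (by positivity)
  have ht : |t| ≤ T := by
    have : ε ≤ 2 * c * T := by
      rw [← sqrt_sq (by positivity : 0 ≤ 2 * c * T)]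
      exact sqrt_le_sqrt (by nlinarith)
    rw [abs_of_nonneg (by positivity), div_le_iff₀ (by positivity)]
    linarith
  have hexp : exp (-t * ε) * exp (c * t ^ 2) = exp (-L) := by
    rw [← exp_add, show -t * ε + c * t ^ 2 = -(ε ^ 2 / (4 * c)) by simp only [t]; field_simp; ring,
      hε2]
    field_simp
  have hupper : μ.real {ω | ε ≤ X ω} ≤ exp (-L) := by
    refine (measure_ge_le_exp_mul_mgf ε (by positivity) (hint t ht)).trans ?_
    rw [← hexp]
    gcongr
    exact hmgf t ht
  have hlower : μ.real {ω | X ω ≤ -ε} ≤ exp (-L) := by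
    have ht' : |-t| ≤ T := by rwa [abs_neg]
    refine (measure_le_le_exp_mul_mgf (-ε) (neg_nonpos.2 (by positivity)) (hint (-t) ht')).trans ?_
    rw [← hexp, neg_mul_neg]
    gcongr
    simpa using hmgf (-t) ht'
  calc μ.real {ω | ε ≤ |X ω|} ≤ μ.real ({ω | ε ≤ X ω} ∪ {ω | X ω ≤ -ε}) :=
        measureReal_mono fun ω (hω : ε ≤ |X ω|) => (le_abs'.1 hω).symm
    _ ≤ μ.real {ω | ε ≤ X ω} + μ.real {ω | X ω ≤ -ε} := measureReal_union_le _ _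
    _ ≤ 2 * exp (-L) := by linarith

theorem ofReal_one_sub_le_measure_biInter [IsProbabilityMeasure μ] {ι : Type*} (I : Finset ι)
    {s : ι → Set Ω} {r : ℝ} (hs : ∀ i ∈ I, μ.real (s i)ᶜ ≤ r) :
    ENNReal.ofReal (1 - I.card * r) ≤ μ (⋂ i ∈ I, s i) := by
  set G := ⋂ i ∈ I, s i
  have hcompl : μ.real Gᶜ ≤ I.card * r :=
    calc μ.real Gᶜ = μ.real (⋃ i ∈ I, (s i)ᶜ) := by simp [G]
      _ ≤ ∑ i ∈ I, μ.real (s i)ᶜ := measureReal_biUnion_finset_le _ _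
      _ ≤ I.card * r := by simpa using sum_le_card_nsmul _ _ _ hs
  have hunion : 1 ≤ μ.real G + μ.real Gᶜ := by
    simpa using measureReal_union_le (μ := μ) G Gᶜ
  rw [← ofReal_measureReal]
  exact ENNReal.ofReal_le_ofReal (by linarith)

theorem ofReal_one_sub_le_measure_forall_sparse_abs_le [IsProbabilityMeasure μ] {p : ℕ}
    (hp : 1 ≤ p) (k : ℕ) (A : Ω → Matrix (Fin p) (Fin p) ℝ) {b r : ℝ} (hr : 0 ≤ r)
    (htail : ∀ v : Fin p → ℝ, ∑ i, v i ^ 2 = 1 → μ.real {ω | b ≤ |v ⬝ᵥ A ω *ᵥ v|} ≤ r) :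
    ENNReal.ofReal (1 - (12 * p) ^ k * r) ≤
      μ {ω | ∀ u : Fin p → ℝ, ∑ i, u i ^ 2 = 1 → kSparse k u → |u ⬝ᵥ A ω *ᵥ u| ≤ 2 * b} := by
  obtain ⟨N, hNsphere, hNcover, hNcard⟩ := exists_sparse_net p k hp
  set net := (univ.powersetCard (min k p)).sigma N
  have hnet : ∀ x ∈ net, μ.real {ω | |(x.2 : EuclideanSpace ℝ (Fin p)).ofLp ⬝ᵥ A ω *ᵥ
      (x.2 : EuclideanSpace ℝ (Fin p)).ofLp| ≤ b}ᶜ ≤ r := by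
    intro x hx
    have hunit := (norm_eq_one_iff _).1
      (mem_sphere_zero_iff_norm.1 (hNsphere x.1 (mem_sigma.1 hx).2))
    refine le_trans (measureReal_mono ?_ (measure_ne_top _ _)) (htail _ hunit)
    intro ω hω
    exact (not_le.1 (Set.notMem_ofPred_iff.1 hω)).le
  refine le_trans ?_ ((ofReal_one_sub_le_measure_biInter net hnet).trans (measure_mono ?_))
  · gcongr
  · intro ω hω u hu hsparse
    exact abs_dotProduct_mulVec_le_of_sparse_net (A ω) hNsphere hNcover
      (fun x hx => Set.mem_iInter₂.1 hω x hx) hu hsparse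

end Probability

theorem stmt8_general {Ω : Type*} [MeasurableSpace Ω] (μ : Measure Ω) [IsProbabilityMeasure μ]
    (p n k : ℕ)
    (A : Ω → Matrix (Fin p) (Fin p) ℝ)
    (c₀ c₁ : ℝ) (hc₀ : 0 < c₀) (hc₁ : 0 < c₁)
    (hint : ∀ (t : ℝ) (u : Fin p → ℝ),
      Integrable (fun ω => Real.exp (t * (u ⬝ᵥ (A ω).mulVec u))) μ)
    (hmgf : ∀ t : ℝ, |t| ≤ c₀ * n → ∀ u : Fin p → ℝ, (∑ i, (u i) ^ 2) = 1 →
      ∫ ω, Real.exp (t * (u ⬝ᵥ (A ω).mulVec u)) ∂μ ≤ Real.exp (c₁ * t ^ 2 / n))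
    (δ : ℝ) (hδ : δ ∈ Set.Ioo (0 : ℝ) 1)
    (hcond : Real.log (2 / δ) + k * Real.log (12 * p) ≤ n * c₀ ^ 2 * c₁) :
    ENNReal.ofReal (1 - δ) ≤
      μ {ω | ∀ u : Fin p → ℝ, (∑ i, (u i) ^ 2) = 1 → kSparse k u →
        |u ⬝ᵥ (A ω).mulVec u|
          ≤ Real.sqrt ((16 * c₁ / n) * (Real.log (2 / δ) + k * Real.log (12 * p)))} := by
  obtain ⟨hδ0, hδ1⟩ := hδ
  rcases Nat.eq_zero_or_pos p with rfl | hp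
  · -- `ℝ⁰` has no unit vectors
    simpa using hδ0.le
  set L := log (2 / δ) + k * log (12 * p)
  have hL : 0 < L := add_pos_of_pos_of_nonneg (log_pos (by rw [lt_div_iff₀ hδ0]; linarith))
    (mul_nonneg k.cast_nonneg (log_nonneg (by norm_cast; omega)))
  have hn : (0 : ℝ) < n := Nat.cast_pos.2 (Nat.pos_of_ne_zero fun h => by
    simp only [h, CharP.cast_eq_zero, zero_mul] at hcond; linarith)
  have hδeq : (12 * p : ℝ) ^ k * (2 * exp (-L)) = δ := by
    rw [show -L = -log (2 / δ) - log ((12 * p) ^ k) by rw [log_pow]; ring, exp_sub, exp_neg,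
      exp_log (by positivity), exp_log (by positivity)]
    field_simp
  have hthreshold : √(16 * c₁ / n * L) = 2 * √(4 * (c₁ / n) * L) := by
    rw [show 16 * c₁ / n * L = 2 ^ 2 * (4 * (c₁ / n) * L) by ring, sqrt_mul (by positivity),
      sqrt_sq (by norm_num)]
  have key := ofReal_one_sub_le_measure_forall_sparse_abs_le hp k A (μ := μ)
    (b := √(4 * (c₁ / n) * L)) (by positivity) fun v hv =>
      measureReal_le_abs_le_of_mgf_le (c := c₁ / n) (T := c₀ * n) (by positivity)
        (fun t _ => hint t v) (fun t ht => (hmgf t ht v hv).trans_eq (by ring_nf))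
        (by positivity) hL.le (hcond.trans_eq (by field_simp))
  rwa [hδeq, ← hthreshold] at key

/-- Lemma F.2: if the random matrix `A` satisfies the uniform MGF bound
`E[exp{t·uᵀAu}] ≤ exp(c₁t²/n)` for all `|t| ≤ c₀n` and unit `u`, then with probability at
least `1 − δ`, `|uᵀAu| ≤ √((16c₁/n)(log(2/δ) + k log(12p)))` for all `k`-sparse unit `u`. -/
theorem stmt8 {Ω : Type*} [MeasurableSpace Ω] (μ : Measure Ω) [IsProbabilityMeasure μ]
    (p n k : ℕ) (hp : 1 ≤ p) (hn : 1 ≤ n) (hk : 1 ≤ k)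
    (A : Ω → Matrix (Fin p) (Fin p) ℝ) (hmeas : ∀ i j, Measurable fun ω => A ω i j)
    (c₀ c₁ : ℝ) (hc₀ : 0 < c₀) (hc₁ : 0 < c₁)
    (hint : ∀ (t : ℝ) (u : Fin p → ℝ),
      Integrable (fun ω => Real.exp (t * (u ⬝ᵥ (A ω).mulVec u))) μ)
    (hmgf : ∀ t : ℝ, |t| ≤ c₀ * n → ∀ u : Fin p → ℝ, (∑ i, (u i) ^ 2) = 1 →
      ∫ ω, Real.exp (t * (u ⬝ᵥ (A ω).mulVec u)) ∂μ ≤ Real.exp (c₁ * t ^ 2 / n))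
    (δ : ℝ) (hδ : δ ∈ Set.Ioo (0 : ℝ) 1)
    (hcond : Real.log (2 / δ) + k * Real.log (12 * p) ≤ n * c₀ ^ 2 * c₁) :
    ENNReal.ofReal (1 - δ) ≤
      μ {ω | ∀ u : Fin p → ℝ, (∑ i, (u i) ^ 2) = 1 → kSparse k u →
        |u ⬝ᵥ (A ω).mulVec u|
          ≤ Real.sqrt ((16 * c₁ / n) * (Real.log (2 / δ) + k * Real.log (12 * p)))} :=
  stmt8_general μ p n k A c₀ c₁ hc₀ hc₁ hint hmgf δ hδ hcond
end

section
/- Let M ∈ ℝ^{p×p}, let X, X' be i.i.d. random vectors in ℝ^p, and let T = E[sign(X−X')sign(X−X')ᵀ] with all entries of sign(X−X') in {−1,1}. Let Σ_{h₁} := Var(h₁(X)), where h₁(X) = E[sign(X−X')⊗sign(X−X') | X] ∈ ℝ^{p²}. Then for z = vec(M), zᵀΣ_{h₁}z ≤ λ_max(T)·(Σ_j ‖M_j‖₂)², where M_j is the j-th column of M. -/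
/-!
Write `s = sgn(X − X')` and `g(x) = E[sᵀ M s | X = x]`, so that `zᵀ Σ_{h₁} z = Var g(X)`.
A variance is at most the second moment, and by Jensen's inequality and the independence of
`X` and `X'`, `E g(X)² ≤ E (sᵀ M s)²`. Since `|sⱼ| = 1`,
`|sᵀ M s| = |∑ⱼ (sᵀ Mⱼ) sⱼ| ≤ ∑ⱼ |sᵀ Mⱼ|`, so by Cauchy–Schwarz in `L²`
`E (sᵀ M s)² ≤ (∑ⱼ ‖sᵀ Mⱼ‖₂)²`, and `‖sᵀ Mⱼ‖₂² = Mⱼᵀ T Mⱼ ≤ tmax ‖Mⱼ‖²`.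
-/

open MeasureTheory ProbabilityTheory Matrix Real

noncomputable def sgn (x : ℝ) : ℝ := if x < 0 then -1 else 1

noncomputable def h1 {Ω : Type*} [MeasurableSpace Ω] (μ : Measure Ω) {p : ℕ}
    (X' : Ω → Fin p → ℝ) (x : Fin p → ℝ) (i j : Fin p) : ℝ :=
  ∫ ω, sgn (x i - X' ω i) * sgn (x j - X' ω j) ∂μ

lemma abs_sgn (x : ℝ) : |sgn x| = 1 := by
  unfold sgn; split_ifs <;> simp

lemma measurable_sgn : Measurable sgn :=
  Measurable.ite (measurableSet_lt measurable_id measurable_const) measurable_const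
    measurable_const

noncomputable def sgnDiff {ι : Type*} (x y : ι → ℝ) : ι → ℝ := fun i => sgn (x i - y i)

lemma abs_sgnDiff {ι : Type*} (x y : ι → ℝ) (i : ι) : |sgnDiff x y i| = 1 := abs_sgn _

lemma measurable_sgnDiff {ι : Type*} :
    Measurable fun q : (ι → ℝ) × (ι → ℝ) => sgnDiff q.1 q.2 :=
  measurable_pi_lambda _ fun i => measurable_sgn.comp
    (((measurable_pi_apply i).comp measurable_fst).sub
      ((measurable_pi_apply i).comp measurable_snd))

lemma sq_sum_le_mul_sq_sum {ι : Type*} (s : Finset ι) {a b : ι → ℝ} {t : ℝ}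
    (hb : ∀ i ∈ s, 0 ≤ b i) (hab : ∀ i ∈ s, a i ^ 2 ≤ t * b i ^ 2) :
    (∑ i ∈ s, a i) ^ 2 ≤ t * (∑ i ∈ s, b i) ^ 2 := by
  rcases lt_or_ge t 0 with ht | ht
  · have hzero : ∀ i ∈ s, a i = 0 ∧ b i = 0 := fun i hi => by
      have h := hab i hi
      have hb2 : b i ^ 2 = 0 := by nlinarith [sq_nonneg (a i), sq_nonneg (b i)]
      have ha2 : a i ^ 2 = 0 := by nlinarith [sq_nonneg (a i)]
      exact ⟨pow_eq_zero_iff two_ne_zero |>.mp ha2, pow_eq_zero_iff two_ne_zero |>.mp hb2⟩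
    simp [Finset.sum_eq_zero fun i hi => (hzero i hi).1,
      Finset.sum_eq_zero fun i hi => (hzero i hi).2]
  · have habs : |∑ i ∈ s, a i| ≤ √t * ∑ i ∈ s, b i := by
      rw [Finset.mul_sum]
      refine (Finset.abs_sum_le_sum_abs _ _).trans (Finset.sum_le_sum fun i hi => ?_)
      rw [← abs_of_nonneg (hb i hi), ← Real.sqrt_sq_eq_abs, ← Real.sqrt_sq_eq_abs (b i),
        ← Real.sqrt_mul ht]
      exact Real.sqrt_le_sqrt (hab i hi)
    calc (∑ i ∈ s, a i) ^ 2 = |∑ i ∈ s, a i| ^ 2 := (sq_abs _).symm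
      _ ≤ (√t * ∑ i ∈ s, b i) ^ 2 := pow_le_pow_left₀ (abs_nonneg _) habs 2
      _ = t * (∑ i ∈ s, b i) ^ 2 := by rw [mul_pow, Real.sq_sqrt ht]

lemma abs_dotProduct_mulVec_le {ι : Type*} [Fintype ι] {s : ι → ℝ} (hs : ∀ i, |s i| ≤ 1)
    (M : Matrix ι ι ℝ) : |s ⬝ᵥ M *ᵥ s| ≤ ∑ j, |(s ᵥ* M) j| := by
  rw [dotProduct_mulVec]
  refine (Finset.abs_sum_le_sum_abs _ _).trans (Finset.sum_le_sum fun j _ => ?_)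
  rw [abs_mul]
  exact mul_le_of_le_one_right (abs_nonneg _) (hs j)

lemma abs_vecMul_le {ι κ : Type*} [Fintype ι] {s : ι → ℝ} (hs : ∀ i, |s i| ≤ 1)
    (M : Matrix ι κ ℝ) (j : κ) : |(s ᵥ* M) j| ≤ ∑ i, |M i j| := by
  refine (Finset.abs_sum_le_sum_abs _ _).trans (Finset.sum_le_sum fun i _ => ?_)
  rw [abs_mul]
  exact mul_le_of_le_one_left (abs_nonneg _) (hs i)

section Probability

variable {Ω : Type*} [MeasurableSpace Ω] {μ : Measure Ω}

lemma integral_sub_integral_sq_le [IsProbabilityMeasure μ] {f : Ω → ℝ}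
    (hf : AEStronglyMeasurable f μ) :
    ∫ ω, (f ω - ∫ ω', f ω' ∂μ) ^ 2 ∂μ ≤ ∫ ω, f ω ^ 2 ∂μ := by
  rw [← variance_eq_integral hf.aemeasurable]
  exact variance_le_expectation_sq hf

lemma sq_integral_le_integral_sq [IsProbabilityMeasure μ] {f : Ω → ℝ} (hf : MemLp f 2 μ) :
    (∫ ω, f ω ∂μ) ^ 2 ≤ ∫ ω, f ω ^ 2 ∂μ := by
  have := variance_nonneg f μ
  rw [variance_eq_sub hf] at this
  simpa using this

lemma integral_abs_mul_abs_le_sqrt_mul_sqrt {f g : Ω → ℝ} (hf : MemLp f 2 μ) (hg : MemLp g 2 μ) :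
    ∫ ω, |f ω| * |g ω| ∂μ ≤ √(∫ ω, f ω ^ 2 ∂μ) * √(∫ ω, g ω ^ 2 ∂μ) := by
  have holder := integral_mul_norm_le_Lp_mul_Lq (μ := μ) Real.HolderConjugate.two_two
    (by simpa using hf) (by simpa using hg)
  simp only [Real.norm_eq_abs, Real.rpow_two, sq_abs, ← Real.sqrt_eq_rpow] at holder
  exact holder

lemma integral_sq_sum_abs_le {ι : Type*} [Fintype ι] {f : ι → Ω → ℝ}
    (hf : ∀ i, MemLp (f i) 2 μ) :
    ∫ ω, (∑ i, |f i ω|) ^ 2 ∂μ ≤ (∑ i, √(∫ ω, f i ω ^ 2 ∂μ)) ^ 2 := by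
  have hint : ∀ i j, Integrable (fun ω => |f i ω| * |f j ω|) μ := fun i j =>
    (hf i).abs.integrable_mul (hf j).abs
  calc ∫ ω, (∑ i, |f i ω|) ^ 2 ∂μ = ∑ i, ∑ j, ∫ ω, |f i ω| * |f j ω| ∂μ := by
        simp_rw [sq, Finset.sum_mul_sum]
        rw [integral_finsetSum _ fun i _ => integrable_finsetSum _ fun j _ => hint i j]
        simp_rw [integral_finsetSum _ fun j _ => hint _ j]
    _ ≤ ∑ i, ∑ j, √(∫ ω, f i ω ^ 2 ∂μ) * √(∫ ω, f j ω ^ 2 ∂μ) := by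
        gcongr with i _ j _
        exact integral_abs_mul_abs_le_sqrt_mul_sqrt (hf i) (hf j)
    _ = _ := by rw [sq, Finset.sum_mul_sum]

lemma integral_dotProduct_sq {ι : Type*} [Fintype ι] {s : Ω → ι → ℝ}
    (hs : ∀ i, MemLp (fun ω => s ω i) 2 μ) (w : ι → ℝ) :
    ∫ ω, (w ⬝ᵥ s ω) ^ 2 ∂μ = w ⬝ᵥ (of fun i j => ∫ ω, s ω i * s ω j ∂μ) *ᵥ w := by
  have hint : ∀ i j, Integrable (fun ω => w i * w j * (s ω i * s ω j)) μ := fun i j =>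
    ((hs i).integrable_mul (hs j)).const_mul _
  have hexp : ∀ ω, (w ⬝ᵥ s ω) ^ 2 = ∑ i, ∑ j, w i * w j * (s ω i * s ω j) := fun ω => by
    simp only [dotProduct, sq, Finset.sum_mul_sum]
    exact Finset.sum_congr rfl fun i _ => Finset.sum_congr rfl fun j _ => by ring
  simp_rw [hexp]
  rw [integral_finsetSum _ fun i _ => integrable_finsetSum _ fun j _ => hint i j]
  simp_rw [integral_finsetSum _ fun j _ => hint _ j, integral_const_mul]
  simp only [dotProduct, mulVec, of_apply, Finset.mul_sum]
  exact Finset.sum_congr rfl fun i _ => Finset.sum_congr rfl fun j _ => by ring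

lemma ProbabilityTheory.IndepFun.integral_integral_comp [IsFiniteMeasure μ] {α β : Type*}
    [MeasurableSpace α] [MeasurableSpace β] {X : Ω → α} {Y : Ω → β} (hXY : IndepFun X Y μ)
    (hX : Measurable X) (hY : Measurable Y) {F : α × β → ℝ} (hF : StronglyMeasurable F)
    (hFi : Integrable F ((μ.map X).prod (μ.map Y))) :
    ∫ ω, ∫ ω', F (X ω, Y ω') ∂μ ∂μ = ∫ ω, F (X ω, Y ω) ∂μ := by
  calc ∫ ω, ∫ ω', F (X ω, Y ω') ∂μ ∂μ = ∫ x, ∫ y, F (x, y) ∂(μ.map Y) ∂(μ.map X) := by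
        rw [integral_map hX.aemeasurable hF.integral_prod_right'.aestronglyMeasurable]
        congr 1 with ω
        exact (integral_map hY.aemeasurable
          (hF.comp_measurable measurable_prodMk_left).aestronglyMeasurable).symm
    _ = ∫ q, F q ∂((μ.map X).prod (μ.map Y)) := (integral_prod F hFi).symm
    _ = ∫ ω, F (X ω, Y ω) ∂μ := by
        rw [← (indepFun_iff_map_prod_eq_prod_map_map hX.aemeasurable hY.aemeasurable).mp hXY,
          integral_map (hX.prodMk hY).aemeasurable hF.aestronglyMeasurable]

lemma ProbabilityTheory.IndepFun.integral_sq_sub_integral_le [IsProbabilityMeasure μ] {α β : Type*}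
    [MeasurableSpace α] [MeasurableSpace β] {X : Ω → α} {Y : Ω → β} (hXY : IndepFun X Y μ)
    (hX : Measurable X) (hY : Measurable Y) {F : α × β → ℝ} (hF : Measurable F) {C : ℝ}
    (hC : ∀ q, |F q| ≤ C) :
    ∫ ω, (∫ ω', F (X ω, Y ω') ∂μ - ∫ ω₀, ∫ ω', F (X ω₀, Y ω') ∂μ ∂μ) ^ 2 ∂μ
      ≤ ∫ ω, F (X ω, Y ω) ^ 2 ∂μ := by
  have hFY : Measurable fun q : α × Ω => F (q.1, Y q.2) :=
    hF.comp (measurable_fst.prodMk (hY.comp measurable_snd))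
  have hF2C : ∀ q, ‖F q ^ 2‖ ≤ C ^ 2 := fun q => by
    simpa [abs_pow] using pow_le_pow_left₀ (abs_nonneg _) (hC q) 2
  have hmoment : Integrable (fun ω => ∫ ω', F (X ω, Y ω') ^ 2 ∂μ) μ := by
    refine .of_bound ((hFY.pow_const 2).stronglyMeasurable.integral_prod_right'.comp_measurable
      hX).aestronglyMeasurable (C ^ 2) (ae_of_all _ fun ω => ?_)
    simpa using norm_integral_le_of_norm_le_const (μ := μ) (ae_of_all _ fun ω' => hF2C _)
  calc _ ≤ ∫ ω, (∫ ω', F (X ω, Y ω') ∂μ) ^ 2 ∂μ :=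
        integral_sub_integral_sq_le
          (hFY.stronglyMeasurable.integral_prod_right'.comp_measurable hX).aestronglyMeasurable
    _ ≤ ∫ ω, ∫ ω', F (X ω, Y ω') ^ 2 ∂μ ∂μ :=
        integral_mono_of_nonneg (ae_of_all _ fun _ => sq_nonneg _) hmoment
          (ae_of_all _ fun ω => sq_integral_le_integral_sq <|
            .of_bound (hF.comp (measurable_const.prodMk hY)).aestronglyMeasurable C
              (ae_of_all _ fun _ => hC _))
    _ = ∫ ω, F (X ω, Y ω) ^ 2 ∂μ :=
        hXY.integral_integral_comp hX hY (hF.pow_const 2).stronglyMeasurable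
          (.of_bound (hF.pow_const 2).aestronglyMeasurable (C ^ 2) (ae_of_all _ hF2C))

lemma integral_sq_dotProduct_mulVec_le [IsFiniteMeasure μ] {ι : Type*} [Fintype ι]
    {s : Ω → ι → ℝ} (hs : Measurable s) (hs1 : ∀ ω i, |s ω i| ≤ 1) (M : Matrix ι ι ℝ) {t : ℝ}
    (ht : ∀ w, w ⬝ᵥ (of fun i j => ∫ ω, s ω i * s ω j ∂μ) *ᵥ w ≤ t * ∑ i, w i ^ 2) :
    ∫ ω, (s ω ⬝ᵥ M *ᵥ s ω) ^ 2 ∂μ ≤ t * (∑ j, √(∑ i, M i j ^ 2)) ^ 2 := by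
  have hcol : ∀ j, MemLp (fun ω => (s ω ᵥ* M) j) 2 μ := fun j =>
    .of_bound (by fun_prop) _ (ae_of_all _ fun ω => abs_vecMul_le (hs1 ω) M j)
  have hcol_sq : ∀ j, ∫ ω, (s ω ᵥ* M) j ^ 2 ∂μ ≤ t * ∑ i, M i j ^ 2 := fun j => by
    have hcoord : ∀ i, MemLp (fun ω => s ω i) 2 μ := fun i =>
      .of_bound (by fun_prop) 1 (ae_of_all _ fun ω => hs1 ω i)
    simpa only [vecMul, dotProduct_comm (s _), integral_dotProduct_sq hcoord] using
      ht fun i => M i j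
  have hpt : ∀ ω, (s ω ⬝ᵥ M *ᵥ s ω) ^ 2 ≤ (∑ j, |(s ω ᵥ* M) j|) ^ 2 := fun ω =>
    sq_le_sq.mpr ((abs_dotProduct_mulVec_le (hs1 ω) M).trans (le_abs_self _))
  have hint : Integrable (fun ω => (∑ j, |(s ω ᵥ* M) j|) ^ 2) μ :=
    (memLp_finsetSum Finset.univ fun j _ => (hcol j).abs).integrable_sq
  calc ∫ ω, (s ω ⬝ᵥ M *ᵥ s ω) ^ 2 ∂μ ≤ ∫ ω, (∑ j, |(s ω ᵥ* M) j|) ^ 2 ∂μ :=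
        integral_mono_of_nonneg (ae_of_all _ fun _ => sq_nonneg _) hint (ae_of_all _ hpt)
    _ ≤ (∑ j, √(∫ ω, (s ω ᵥ* M) j ^ 2 ∂μ)) ^ 2 := integral_sq_sum_abs_le hcol
    _ ≤ t * (∑ j, √(∑ i, M i j ^ 2)) ^ 2 :=
        sq_sum_le_mul_sq_sum _ (fun _ _ => Real.sqrt_nonneg _) fun j _ => by
          rw [Real.sq_sqrt (integral_nonneg fun _ => sq_nonneg _),
            Real.sq_sqrt (Finset.sum_nonneg fun _ _ => sq_nonneg _)]
          exact hcol_sq j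

lemma sum_mul_h1_eq_integral [IsFiniteMeasure μ] {p : ℕ} (M : Matrix (Fin p) (Fin p) ℝ)
    {X' : Ω → Fin p → ℝ} (hX' : Measurable X') (x : Fin p → ℝ) :
    ∑ i, ∑ j, M i j * h1 μ X' x i j
      = ∫ ω, sgnDiff x (X' ω) ⬝ᵥ M *ᵥ sgnDiff x (X' ω) ∂μ := by
  have hs : Measurable fun ω => sgnDiff x (X' ω) :=
    measurable_sgnDiff.comp (measurable_const.prodMk hX')
  have hint : ∀ i j, Integrable (fun ω => M i j * (sgnDiff x (X' ω) i * sgnDiff x (X' ω) j)) μ :=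
    fun i j => (Integrable.of_bound (by fun_prop) 1 (ae_of_all _ fun ω => by
      simp [abs_sgnDiff])).const_mul _
  have hexp : ∀ ω, sgnDiff x (X' ω) ⬝ᵥ M *ᵥ sgnDiff x (X' ω)
      = ∑ i, ∑ j, M i j * (sgnDiff x (X' ω) i * sgnDiff x (X' ω) j) := fun ω => by
    simp only [dotProduct, mulVec, Finset.mul_sum]
    exact Finset.sum_congr rfl fun i _ => Finset.sum_congr rfl fun j _ => by ring
  simp_rw [hexp]
  rw [integral_finsetSum _ fun i _ => integrable_finsetSum _ fun j _ => hint i j]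
  simp_rw [integral_finsetSum _ fun j _ => hint _ j, integral_const_mul]
  rfl

end Probability

theorem stmt14_general {Ω : Type*} [MeasurableSpace Ω] (μ : Measure Ω) [IsProbabilityMeasure μ]
    (p : ℕ) (M : Matrix (Fin p) (Fin p) ℝ)
    (X X' : Ω → Fin p → ℝ) (hX : Measurable X) (hX' : Measurable X')
    (hindep : IndepFun X X' μ)
    (T : Matrix (Fin p) (Fin p) ℝ)
    (hT : ∀ i j, T i j = ∫ ω, sgn (X ω i - X' ω i) * sgn (X ω j - X' ω j) ∂μ)
    (tmax : ℝ)
    (htmax : ∀ z : Fin p → ℝ, z ⬝ᵥ T.mulVec z ≤ tmax * ∑ i, (z i) ^ 2) :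
    (∫ ω, ((∑ i, ∑ j, M i j * h1 μ X' (X ω) i j)
          - ∫ ω', (∑ i, ∑ j, M i j * h1 μ X' (X ω') i j) ∂μ) ^ 2 ∂μ)
      ≤ tmax * (∑ j, Real.sqrt (∑ i, (M i j) ^ 2)) ^ 2 := by
  have hT' : T = of fun i j => ∫ ω, sgnDiff (X ω) (X' ω) i * sgnDiff (X ω) (X' ω) j ∂μ :=
    Matrix.ext hT
  have hF_bound : ∀ q : (Fin p → ℝ) × (Fin p → ℝ),
      |sgnDiff q.1 q.2 ⬝ᵥ M *ᵥ sgnDiff q.1 q.2| ≤ ∑ j, ∑ i, |M i j| := fun q =>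
    (abs_dotProduct_mulVec_le (fun i => (abs_sgnDiff _ _ i).le) M).trans
      (Finset.sum_le_sum fun j _ => abs_vecMul_le (fun i => (abs_sgnDiff _ _ i).le) M j)
  simp only [sum_mul_h1_eq_integral M hX']
  calc _ ≤ ∫ ω, (sgnDiff (X ω) (X' ω) ⬝ᵥ M *ᵥ sgnDiff (X ω) (X' ω)) ^ 2 ∂μ :=
        hindep.integral_sq_sub_integral_le hX hX'
          ((by fun_prop : Continuous fun s => s ⬝ᵥ M *ᵥ s).measurable.comp measurable_sgnDiff)
          hF_bound
    _ ≤ _ := integral_sq_dotProduct_mulVec_le (measurable_sgnDiff.comp (hX.prodMk hX'))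
        (fun ω i => (abs_sgnDiff _ _ i).le) M (hT' ▸ htmax)

/-- Lemma F.9: for `z = vec(M)`, `zᵀΣ_{h₁}z = Var(Σ_{ij} M_{ij} h₁(X)_{ij})
≤ λ_max(T)·(Σ_j ‖M_j‖₂)²`, where `T = E[sign(X−X')sign(X−X')ᵀ]` and
`X, X'` are i.i.d. -/
theorem stmt14 {Ω : Type*} [MeasurableSpace Ω] (μ : Measure Ω) [IsProbabilityMeasure μ]
    (p : ℕ) (M : Matrix (Fin p) (Fin p) ℝ)
    (X X' : Ω → Fin p → ℝ) (hX : Measurable X) (hX' : Measurable X')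
    (hindep : IndepFun X X' μ) (hid : IdentDistrib X X' μ μ)
    (T : Matrix (Fin p) (Fin p) ℝ)
    (hT : ∀ i j, T i j = ∫ ω, sgn (X ω i - X' ω i) * sgn (X ω j - X' ω j) ∂μ)
    (tmax : ℝ)
    (htmax : ∀ z : Fin p → ℝ, z ⬝ᵥ T.mulVec z ≤ tmax * ∑ i, (z i) ^ 2) :
    (∫ ω, ((∑ i, ∑ j, M i j * h1 μ X' (X ω) i j)
          - ∫ ω', (∑ i, ∑ j, M i j * h1 μ X' (X ω') i j) ∂μ) ^ 2 ∂μ)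
      ≤ tmax * (∑ j, Real.sqrt (∑ i, (M i j) ^ 2)) ^ 2 :=
  stmt14_general μ p M X X' hX hX' hindep T hT tmax htmax
end

section
/- Let Z ~ N(0, Σ) with Σ positive definite, and let T = E[sign(Z)sign(Z)ᵀ]. Then T ⪰ (2/π)Σ in the positive semidefinite order, and hence λ_min(T) ≥ (2/π)λ_min(Σ). -/
/-!
For `t ∈ [0, 1]` let `φ t = xᵀ (arcsin[tΣ] - tΣ) x`, the functions being applied entrywise.
Then `φ 0 = 0` and `φ' t = xᵀ (Σ ∘ ((1 - t²Σ∘Σ)^{-1/2} - 1)) x`. The function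
`u ↦ (1 - u)^{-1/2} - 1` has a power series with nonnegative coefficients, so by the Schur
product theorem it maps the PSD matrix `t²Σ∘Σ`, whose entries have modulus `< 1`, to a PSD
matrix; one more Schur product with `Σ` shows `φ' ≥ 0`. Hence `φ 1 ≥ 0`, i.e. `arcsin[Σ] ⪰ Σ`.
Differentiating in `t` avoids summing the arcsine series on the diagonal, where `Σᵢᵢ = 1` lies
on its circle of convergence.
-/

open Matrix Real Set
open scoped ComplexOrder

namespace Real

theorem choose_add_sub_one_pos {a : ℝ} (ha : 0 < a) (k : ℕ) :
    0 < Ring.choose (a + k - 1) k := by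
  have h := Ring.factorial_nsmul_multichoose_eq_ascPochhammer a k
  rw [Polynomial.ascPochhammer_smeval_eq_eval, nsmul_eq_mul] at h
  rw [← Ring.multichoose_eq]
  exact pos_of_mul_pos_right (h ▸ ascPochhammer_pos k a ha) (by positivity)

theorem hasSum_one_div_sqrt_one_sub {u : ℝ} (hu : |u| < 1) :
    HasSum (fun k : ℕ ↦ Ring.choose ((1 / 2 : ℝ) + k - 1) k * u ^ k) (1 / √(1 - u)) := by
  have := (one_div_one_sub_rpow_hasFPowerSeriesOnBall_zero (1 / 2)).hasSum (y := u)
    (by simpa [enorm_eq_nnnorm, ← NNReal.coe_lt_coe] using hu)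
  simpa [FormalMultilinearSeries.ofScalars_apply_eq, sqrt_eq_rpow, mul_comm (u ^ _)] using this

theorem hasDerivAt_arcsin_mul_sub_mul {s t : ℝ} (h : |t * s| < 1) :
    HasDerivAt (fun t ↦ arcsin (t * s) - t * s) (s * (1 / √(1 - t ^ 2 * (s * s)) - 1)) t := by
  have harcsin := hasDerivAt_arcsin (abs_lt.1 h).1.ne' (abs_lt.1 h).2.ne
  refine ((harcsin.comp t (hasDerivAt_mul_const s)).fun_sub
    (hasDerivAt_mul_const s)).congr_deriv ?_
  rw [mul_pow, sq s]
  ring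

end Real

namespace Matrix

variable {n 𝕜 : Type*} [RCLike 𝕜]

theorem PosSemidef.sq_apply_le {A : Matrix n n ℝ} (hA : A.PosSemidef) (i j : n) :
    A i j ^ 2 ≤ A i i * A j j := by
  classical
  have hdet := (hA.submatrix ![i, j]).det_nonneg
  rw [det_fin_two] at hdet
  simp only [submatrix_apply, cons_val_zero, cons_val_one] at hdet
  have hsymm : A j i = A i j := by simpa using hA.isHermitian.apply i j
  rw [hsymm] at hdet
  linarith

variable [Fintype n]

theorem isClosed_setOf_posSemidef : IsClosed {M : Matrix n n 𝕜 | M.PosSemidef} := by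
  simp only [posSemidef_iff_dotProduct_mulVec, Set.ofPred_and, Set.ofPred_forall]
  refine .inter (isClosed_eq continuous_id.matrix_conjTranspose continuous_id)
    (isClosed_iInter fun x ↦ ?_)
  exact isClosed_le continuous_const (by fun_prop)

theorem PosSemidef.of_hasSum {f : ℕ → Matrix n n 𝕜} {M : Matrix n n 𝕜}
    (hf : ∀ k, (f k).PosSemidef) (hM : HasSum f M) : M.PosSemidef :=
  isClosed_setOf_posSemidef.mem_of_tendsto hM <|
    .of_forall fun s ↦ posSemidef_sum s fun k _ ↦ hf k

theorem PosSemidef.map_pow {A : Matrix n n 𝕜} (hA : A.PosSemidef) (k : ℕ) :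
    (A.map (· ^ k)).PosSemidef := by
  induction k with
  | zero =>
    convert posSemidef_vecMulVec_self_star (1 : n → 𝕜) using 1
    ext i j
    simp [vecMulVec]
  | succ k ih =>
    convert ih.hadamard hA using 1
    ext i j
    simp [pow_succ]

theorem PosSemidef.map_of_hasSum {A : Matrix n n 𝕜} (hA : A.PosSemidef) {f : 𝕜 → 𝕜}
    {a : ℕ → ℝ} (ha : ∀ k, 0 ≤ a k) (hf : ∀ i j, HasSum (fun k ↦ a k • A i j ^ k) (f (A i j))) :
    (A.map f).PosSemidef :=
  .of_hasSum (fun k ↦ (hA.map_pow k).smul (ha k)) <|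
    Pi.hasSum.2 fun i ↦ Pi.hasSum.2 fun j ↦ by simpa using hf i j

theorem PosSemidef.map_one_div_sqrt_one_sub_sub_one {A : Matrix n n ℝ} (hA : A.PosSemidef)
    (h : ∀ i j, |A i j| < 1) : (A.map fun u ↦ 1 / √(1 - u) - 1).PosSemidef := by
  classical
  refine hA.map_of_hasSum
    (a := Function.update (fun k : ℕ ↦ Ring.choose ((1 / 2 : ℝ) + k - 1) k) 0 0)
    (fun k ↦ ?_) fun i j ↦ ?_
  · rcases eq_or_ne k 0 with rfl | hk
    · simp
    · simpa [hk] using (Real.choose_add_sub_one_pos one_half_pos k).le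
  · have hs := (Real.hasSum_one_div_sqrt_one_sub (h i j)).update 0 0
    rw [pow_zero, mul_one, Ring.choose_zero_right, zero_sub, neg_add_eq_sub] at hs
    convert hs using 1
    · rfl
    · ext k
      rcases eq_or_ne k 0 with rfl | hk <;> simp [*]

theorem hasDerivAt_dotProduct_mulVec_of {F : n → n → ℝ → ℝ} {F' : Matrix n n ℝ} {t : ℝ}
    (hF : ∀ i j, HasDerivAt (F i j) (F' i j) t) (x : n → ℝ) :
    HasDerivAt (fun t ↦ x ⬝ᵥ of (fun i j ↦ F i j t) *ᵥ x) (x ⬝ᵥ F' *ᵥ x) t := by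
  simp only [dotProduct, mulVec, of_apply]
  exact HasDerivAt.fun_sum fun i _ ↦
    (HasDerivAt.fun_sum fun j _ ↦ (hF i j).mul_const _).const_mul _

theorem posSemidef_of_hasDerivAt_posSemidef {F : n → n → ℝ → ℝ} {F' : ℝ → Matrix n n ℝ}
    {a b : ℝ} (hab : a ≤ b) (hherm : (of fun i j ↦ F i j b - F i j a).IsHermitian)
    (hcont : ∀ i j, ContinuousOn (F i j) (Icc a b))
    (hderiv : ∀ t ∈ Ioo a b, ∀ i j, HasDerivAt (F i j) (F' t i j) t)
    (hF' : ∀ t ∈ Ioo a b, (F' t).PosSemidef) :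
    (of fun i j ↦ F i j b - F i j a).PosSemidef := by
  refine .of_dotProduct_mulVec_nonneg hherm fun x ↦ ?_
  set φ := fun t ↦ x ⬝ᵥ of (fun i j ↦ F i j t) *ᵥ x
  have hmono : MonotoneOn φ (Icc a b) := by
    refine monotoneOn_of_hasDerivWithinAt_nonneg (f' := fun t ↦ x ⬝ᵥ F' t *ᵥ x)
      (convex_Icc a b) ?_ (fun t ht ↦ ?_) fun t ht ↦ ?_
    · simp only [φ, dotProduct, mulVec, of_apply]
      fun_prop
    · rw [interior_Icc] at ht
      exact (hasDerivAt_dotProduct_mulVec_of (hderiv t ht) x).hasDerivWithinAt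
    · rw [interior_Icc] at ht
      simpa using (hF' t ht).dotProduct_mulVec_nonneg x
  have hφ : star x ⬝ᵥ (of fun i j ↦ F i j b - F i j a) *ᵥ x = φ b - φ a := by
    rw [star_trivial, ← dotProduct_sub, ← sub_mulVec]
    rfl
  rw [hφ, sub_nonneg]
  exact hmono ⟨le_rfl, hab⟩ ⟨hab, le_rfl⟩ hab

theorem PosSemidef.map_arcsin_sub {A : Matrix n n ℝ} (hA : A.PosSemidef)
    (hdiag : ∀ i, A i i = 1) : (A.map arcsin - A).PosSemidef := by
  have habs : ∀ i j, |A i j| ≤ 1 := fun i j ↦ by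
    simpa [hdiag, sq_le_one_iff_abs_le_one] using hA.sq_apply_le i j
  have hincr : (of fun i j ↦ (arcsin (1 * A i j) - 1 * A i j) - (arcsin (0 * A i j) - 0 * A i j))
      = A.map arcsin - A := by
    ext i j
    simp
  rw [← hincr]
  refine posSemidef_of_hasDerivAt_posSemidef (F := fun i j t ↦ arcsin (t * A i j) - t * A i j)
    (F' := fun t ↦ A ⊙ (t ^ 2 • (A ⊙ A)).map fun u ↦ 1 / √(1 - u) - 1) zero_le_one ?_
    (fun i j ↦ by fun_prop) (fun t ht i j ↦ ?_) fun t ht ↦ ?_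
  · rw [hincr]
    exact (hA.isHermitian.map arcsin fun _ ↦ rfl).sub hA.isHermitian
  · have hts : |t * A i j| < 1 := by
      rw [abs_mul, abs_of_pos ht.1]
      exact (mul_le_of_le_one_right ht.1.le (habs i j)).trans_lt ht.2
    simpa using Real.hasDerivAt_arcsin_mul_sub_mul hts
  · refine hA.hadamard (((hA.hadamard hA).smul (sq_nonneg t)).map_one_div_sqrt_one_sub_sub_one
      fun i j ↦ ?_)
    have hA2 : A i j * A i j ≤ 1 := by
      rw [← abs_mul_abs_self]
      exact mul_le_one₀ (habs i j) (abs_nonneg _) (habs i j)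
    rw [smul_apply, hadamard_apply, smul_eq_mul,
      abs_of_nonneg (mul_nonneg (sq_nonneg t) (mul_self_nonneg _))]
    exact (mul_le_of_le_one_right (sq_nonneg t) hA2).trans_lt
      (pow_lt_one₀ ht.1.le ht.2 two_ne_zero)

end Matrix

/-- If `Σ` is a positive definite correlation matrix and `T_{ij} = (2/π)arcsin(Σ_{ij})`
(the Kendall's tau matrix of a Gaussian `N(0,Σ)`), then `T ⪰ (2/π)Σ` in the PSD order,
and hence `λ_min(T) ≥ (2/π)λ_min(Σ)`. -/
theorem stmt17 (p : ℕ) (Sig : Matrix (Fin p) (Fin p) ℝ) (hpd : Sig.PosDef)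
    (hdiag : ∀ i, Sig i i = 1)
    (T : Matrix (Fin p) (Fin p) ℝ)
    (hT : ∀ i j, T i j = 2 / Real.pi * Real.arcsin (Sig i j)) :
    (T - (2 / Real.pi) • Sig).PosSemidef ∧
      ∀ c : ℝ, (∀ x : Fin p → ℝ, c * ∑ i, (x i) ^ 2 ≤ x ⬝ᵥ Sig.mulVec x) →
        ∀ x : Fin p → ℝ, 2 / Real.pi * c * ∑ i, (x i) ^ 2 ≤ x ⬝ᵥ T.mulVec x := by
  have hT' : T - (2 / π) • Sig = (2 / π) • (Sig.map arcsin - Sig) := by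
    ext i j
    simp [hT, mul_sub]
  have hpsd : (T - (2 / π) • Sig).PosSemidef :=
    hT' ▸ (hpd.posSemidef.map_arcsin_sub hdiag).smul (by positivity)
  refine ⟨hpsd, fun c hc x ↦ ?_⟩
  have hsplit : x ⬝ᵥ T *ᵥ x = x ⬝ᵥ (T - (2 / π) • Sig) *ᵥ x + 2 / π * (x ⬝ᵥ Sig *ᵥ x) := by
    rw [sub_mulVec, dotProduct_sub, smul_mulVec, dotProduct_smul, smul_eq_mul]
    ring
  calc 2 / π * c * ∑ i, x i ^ 2 = 2 / π * (c * ∑ i, x i ^ 2) := mul_assoc _ _ _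
    _ ≤ 2 / π * (x ⬝ᵥ Sig *ᵥ x) := by gcongr; exact hc x
    _ ≤ x ⬝ᵥ T *ᵥ x := by
      rw [hsplit]
      simpa using hpsd.dotProduct_mulVec_nonneg x
end
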